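/- arXiv:2302.01227 — 6 statements merged into one kernel-verified Lean document; each statement's English description precedes it below -/
import Mathlib

section
/- Let v be a cut vertex of G whose removal separates the graph into a component G_k containing k and a component G_i, with v ≠ k. Then for any two vertices s, t ∈ V(G_i), the maximum s-t flow is unaffected by deleting k: z_{st}(G) = z_{st}(G \ {k}). -/
open Finset

variable {V : Type*} [Fintype V] [DecidableEq V]

/-- `f` is a feasible `s`-`t` flow in the capacitated graph restricted to the
active vertex set `A`. -/
def IsFlow (cap : V → V → ℝ) (A : Finset V) (s t : V) (f : V → V → ℝ) : Prop :=
  (∀ i j, 0 ≤ f i j) ∧ (∀ i j, f i j ≤ cap i j) ∧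
  (∀ i j, i ∉ A ∨ j ∉ A → f i j = 0) ∧
  (∀ i ∈ A, i ≠ s → i ≠ t → (∑ j, f i j) = (∑ j, f j i))

/-- Maximum `s`-`t` flow value in the graph induced on the active set `A`. -/
noncomputable def maxFlow (cap : V → V → ℝ) (A : Finset V) (s t : V) : ℝ :=
  sSup {r | ∃ f, IsFlow cap A s t f ∧ (∑ j, f s j) - (∑ j, f j s) = r}

/-- `Z_k`: sum of max-flow values over all ordered pairs of distinct active
vertices other than `k`. -/
noncomputable def Zk (cap : V → V → ℝ) (A : Finset V) (k : V) : ℝ :=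
  ∑ s ∈ A.erase k, ∑ t ∈ (A.erase k).erase s, maxFlow cap A s t

/-- All-pairs vitality of `k`. -/
noncomputable def Lk (cap : V → V → ℝ) (A : Finset V) (k : V) : ℝ :=
  Zk cap A k - Zk cap (A.erase k) k

/-- If `v` is a cut vertex separating the side `B` from the side `A` containing
`k` (with `v ≠ k`), then the max flow between any two vertices of `B` is
unaffected by deleting `k`. -/
theorem cut_vertex_flow_unaffected (cap : V → V → ℝ) (hcap : ∀ i j, 0 ≤ cap i j)
    (k v : V) (hvk : v ≠ k) (A B : Finset V) (hkA : k ∈ A)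
    (hvA : v ∉ A) (hvB : v ∉ B) (hAB : Disjoint A B)
    (hpart : ∀ x : V, x ∈ A ∨ x ∈ B ∨ x = v)
    (hBne : B.Nonempty)
    (hsep : ∀ i ∈ A, ∀ j ∈ B, cap i j = 0 ∧ cap j i = 0)
    (s t : V) (hs : s ∈ B) (ht : t ∈ B) (hst : s ≠ t) :
    maxFlow cap Finset.univ s t = maxFlow cap (Finset.univ.erase k) s t := by
  classical
  have hAs : ∀ i ∈ A, i ≠ s := fun i hi h =>
    (Finset.disjoint_left.mp hAB hi) (h ▸ hs)
  have hAt : ∀ i ∈ A, i ≠ t := fun i hi h =>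
    (Finset.disjoint_left.mp hAB hi) (h ▸ ht)
  have hvs : v ≠ s := fun h => hvB (h ▸ hs)
  have hvt : v ≠ t := fun h => hvB (h ▸ ht)
  have hsplit : ∀ g : V → ℝ, (∑ j, g j) = (∑ j ∈ A, g j) + (∑ j ∈ B, g j) + g v := by
    intro g
    have huniv : (Finset.univ : Finset V) = (A ∪ B) ∪ {v} := by
      ext x
      simp only [Finset.mem_univ, Finset.mem_union, Finset.mem_singleton, true_iff]
      rcases hpart x with h | h | h <;> tauto
    have hd1 : Disjoint (A ∪ B) ({v} : Finset V) := by
      simp only [Finset.disjoint_singleton_right, Finset.mem_union]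
      tauto
    rw [huniv, Finset.sum_union hd1, Finset.sum_union hAB, Finset.sum_singleton]
  have e1 : ∀ (g : V → ℝ), (∑ j, (if j ∈ A then 0 else g j)) = (∑ j, g j) - ∑ j ∈ A, g j := by
    intro g
    have h2 : (∑ j, (if j ∈ A then g j else 0)) = ∑ j ∈ A, g j := by
      rw [Finset.sum_ite_mem, Finset.univ_inter]
    have h3 : (∑ j, (if j ∈ A then 0 else g j)) + (∑ j, (if j ∈ A then g j else 0))
        = ∑ j, g j := by
      rw [← Finset.sum_add_distrib]
      apply Finset.sum_congr rfl
      intro j _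
      by_cases hj : j ∈ A <;> simp [hj]
    linarith
  unfold maxFlow
  congr 1
  ext r
  simp only [Set.mem_setOf_eq]
  constructor
  · rintro ⟨f, ⟨hpos, hcap', hzero, hcons⟩, hval⟩
    have crossAB : ∀ i ∈ A, ∀ j ∈ B, f i j = 0 := fun i hi j hj =>
      le_antisymm ((hcap' i j).trans_eq (hsep i hi j hj).1) (hpos i j)
    have crossBA : ∀ i ∈ A, ∀ j ∈ B, f j i = 0 := fun i hi j hj =>
      le_antisymm ((hcap' j i).trans_eq (hsep i hi j hj).2) (hpos j i)
    -- balance at the cut vertex v restricted to side A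
    have hbal : (∑ i ∈ A, f i v) = ∑ i ∈ A, f v i := by
      have h1 : (∑ i ∈ A, (∑ j, f i j)) = ∑ i ∈ A, (∑ j, f j i) :=
        Finset.sum_congr rfl fun i hi =>
          hcons i (Finset.mem_univ i) (hAs i hi) (hAt i hi)
      have h2 : (∑ i ∈ A, ((∑ j ∈ A, f i j) + (∑ j ∈ B, f i j) + f i v))
          = ∑ i ∈ A, ((∑ j ∈ A, f j i) + (∑ j ∈ B, f j i) + f v i) := by
        calc (∑ i ∈ A, ((∑ j ∈ A, f i j) + (∑ j ∈ B, f i j) + f i v))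
            = ∑ i ∈ A, (∑ j, f i j) := by
              apply Finset.sum_congr rfl; intro i _; rw [hsplit (f i)]
          _ = ∑ i ∈ A, (∑ j, f j i) := h1
          _ = ∑ i ∈ A, ((∑ j ∈ A, f j i) + (∑ j ∈ B, f j i) + f v i) := by
              apply Finset.sum_congr rfl; intro i _; rw [hsplit (fun j => f j i)]
      have hz1 : ∀ i ∈ A, (∑ j ∈ B, f i j) = 0 := fun i hi =>
        Finset.sum_eq_zero fun j hj => crossAB i hi j hj
      have hz2 : ∀ i ∈ A, (∑ j ∈ B, f j i) = 0 := fun i hi =>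
        Finset.sum_eq_zero fun j hj => crossBA i hi j hj
      have hcomm : (∑ i ∈ A, ∑ j ∈ A, f i j) = ∑ i ∈ A, ∑ j ∈ A, f j i :=
        Finset.sum_comm
      have h3 : (∑ i ∈ A, ∑ j ∈ A, f i j) + (∑ i ∈ A, ∑ j ∈ B, f i j)
          + (∑ i ∈ A, f i v)
          = (∑ i ∈ A, ∑ j ∈ A, f j i) + (∑ i ∈ A, ∑ j ∈ B, f j i)
          + (∑ i ∈ A, f v i) := by
        rw [← Finset.sum_add_distrib, ← Finset.sum_add_distrib,
          ← Finset.sum_add_distrib, ← Finset.sum_add_distrib]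
        exact h2
      have h4 : (∑ i ∈ A, ∑ j ∈ B, f i j) = 0 :=
        Finset.sum_eq_zero fun i hi => hz1 i hi
      have h5 : (∑ i ∈ A, ∑ j ∈ B, f j i) = 0 :=
        Finset.sum_eq_zero fun i hi => hz2 i hi
      rw [h4, h5, hcomm] at h3
      linarith
    set f' : V → V → ℝ := fun i j => if i ∈ A ∨ j ∈ A then 0 else f i j with hf'
    have hfB : ∀ i, i ∉ A → ∀ j, f' i j = if j ∈ A then 0 else f i j := by
      intro i hi j
      by_cases hj : j ∈ A <;> simp [hf', hi, hj]
    refine ⟨f', ⟨?_, ?_, ?_, ?_⟩, ?_⟩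
    · intro i j; by_cases h : i ∈ A ∨ j ∈ A <;> simp [hf', h, hpos i j]
    · intro i j
      by_cases h : i ∈ A ∨ j ∈ A <;> simp only [hf', h, if_true, if_false,
        if_pos, if_neg]
      · exact hcap i j
      · exact hcap' i j
    · intro i j h
      rcases h with h | h
      · have : i = k := by simpa using h
        simp [hf', this, hkA]
      · have : j = k := by simpa using h
        simp [hf', this, hkA]
    · intro i _ his hit
      by_cases hiA : i ∈ A
      · simp [hf', hiA]
      rcases hpart i with h | hiB | hiv
      · exact absurd h hiA
      · -- i ∈ B : f' agrees with f termwise on row and column i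
        have row : ∀ j, f' i j = f i j := by
          intro j
          rw [hfB i hiA j]
          by_cases hj : j ∈ A
          · simp [hj, (crossBA j hj i hiB).symm]
          · simp [hj]
        have col : ∀ j, f' j i = f j i := by
          intro j
          by_cases hj : j ∈ A
          · simp [hf', hj, (crossAB j hj i hiB).symm]
          · simp [hf', hj, hiA]
        simp only [row, col]
        exact hcons i (Finset.mem_univ i) his hit
      · subst hiv
        have rv : (∑ j, f' i j) = (∑ j, f i j) - ∑ j ∈ A, f i j := by
          calc (∑ j, f' i j) = ∑ j, (if j ∈ A then 0 else f i j) := by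
                apply Finset.sum_congr rfl; intro j _; exact hfB i hiA j
            _ = (∑ j, f i j) - ∑ j ∈ A, f i j := e1 _
        have cv : (∑ j, f' j i) = (∑ j, f j i) - ∑ j ∈ A, f j i := by
          calc (∑ j, f' j i) = ∑ j, (if j ∈ A then 0 else f j i) := by
                apply Finset.sum_congr rfl; intro j _
                by_cases hj : j ∈ A <;> simp [hf', hj, hiA]
            _ = (∑ j, f j i) - ∑ j ∈ A, f j i := e1 _
        have hv := hcons i (Finset.mem_univ i) his hit
        have hbal' : (∑ j ∈ A, f j i) = ∑ j ∈ A, f i j := hbal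
        rw [rv, cv, hv, hbal']
    · -- value is unchanged
      have hsA : s ∉ A := fun h => hAs s h rfl
      have row : ∀ j, f' s j = f s j := by
        intro j
        rw [hfB s hsA j]
        by_cases hj : j ∈ A
        · simp [hj, (crossBA j hj s hs).symm]
        · simp [hj]
      have col : ∀ j, f' j s = f j s := by
        intro j
        by_cases hj : j ∈ A
        · simp [hf', hj, (crossAB j hj s hs).symm]
        · simp [hf', hj, hsA]
      simp only [row, col]
      exact hval
  · rintro ⟨f, ⟨hpos, hcap', hzero, hcons⟩, hval⟩
    refine ⟨f, ⟨hpos, hcap', ?_, ?_⟩, hval⟩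
    · intro i j h
      rcases h with h | h <;> simp at h
    · intro i _ his hit
      by_cases hik : i = k
      · subst hik
        have r0 : ∀ j, f i j = 0 := fun j =>
          hzero i j (Or.inl (by simp))
        have c0 : ∀ j, f j i = 0 := fun j =>
          hzero j i (Or.inr (by simp))
        simp [r0, c0]
      · exact hcons i (by simp [hik]) his hit
end

section
/- Let v be a cut vertex of G (v ≠ k) separating a component G_k containing k from a component G_i containing a vertex i. Then for any s, t ∈ V(G_k) ∪ {v}, deleting i does not change the contribution of the pair (s,t) to the vitality of k: z_{st}(G) - z_{st}(G\{k}) = z_{st}(G\{i}) - z_{st}(G\{i,k}). -/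
open Finset

variable {V : Type*} [Fintype V] [DecidableEq V]

lemma flow_set_erase (cap : V → V → ℝ) (hcap : ∀ i j, 0 ≤ cap i j)
    (v i : V) (A B : Finset V) (hiB : i ∈ B) (hvB : v ∉ B)
    (hAB : Disjoint A B) (hpart : ∀ x : V, x ∈ A ∨ x ∈ B ∨ x = v)
    (hsep : ∀ a ∈ A, ∀ b ∈ B, cap a b = 0 ∧ cap b a = 0)
    (S : Finset V) (hBS : B ⊆ S)
    (s t : V) (hs : s ∈ insert v A) (ht : t ∈ insert v A) :
    maxFlow cap S s t = maxFlow cap (S.erase i) s t := by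
  have hnotB : ∀ x ∈ insert v A, x ∉ B := by
    intro x hx hxB
    rcases mem_insert.mp hx with h | h
    · exact hvB (h ▸ hxB)
    · exact (Finset.disjoint_left.mp hAB h) hxB
  have hsB := hnotB s hs
  have htB := hnotB t ht
  unfold maxFlow
  congr 1
  ext r
  simp only [Set.mem_setOf_eq]
  constructor
  · rintro ⟨f, ⟨h0, hc, hz, hcons⟩, hval⟩
    -- zero out everything touching B
    set g : V → V → ℝ := fun x y => if x ∈ B ∨ y ∈ B then 0 else f x y with hg
    have hfAB : ∀ a ∈ A, ∀ b ∈ B, f a b = 0 :=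
      fun a ha b hb => le_antisymm ((hc a b).trans_eq (hsep a ha b hb).1) (h0 a b)
    have hfBA : ∀ a ∈ A, ∀ b ∈ B, f b a = 0 :=
      fun a ha b hb => le_antisymm ((hc b a).trans_eq (hsep a ha b hb).2) (h0 b a)
    -- key: circulation in/out of B via v balances
    have hcB : ∀ b ∈ B, (∑ j, f b j) = (∑ j, f j b) := by
      intro b hb
      refine hcons b (hBS hb) ?_ ?_
      · exact fun h => hsB (h ▸ hb)
      · exact fun h => htB (h ▸ hb)
    have hout : ∀ b ∈ B, (∑ j, f b j) = (∑ j ∈ B, f b j) + f b v := by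
      intro b hb
      rw [← Finset.sum_add_sum_compl B (f b)]
      congr 1
      refine Finset.sum_eq_single_of_mem v (Finset.mem_compl.mpr hvB) ?_
      intro c hc' hcv
      rcases hpart c with h | h | h
      · exact hfBA c h b hb
      · exact absurd h (Finset.mem_compl.mp hc')
      · exact absurd h hcv
    have hin : ∀ b ∈ B, (∑ j, f j b) = (∑ j ∈ B, f j b) + f v b := by
      intro b hb
      rw [← Finset.sum_add_sum_compl B (fun j => f j b)]
      congr 1
      refine Finset.sum_eq_single_of_mem v (Finset.mem_compl.mpr hvB) ?_
      intro c hc' hcv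
      rcases hpart c with h | h | h
      · exact hfAB c h b hb
      · exact absurd h (Finset.mem_compl.mp hc')
      · exact absurd h hcv
    have key : (∑ b ∈ B, f b v) = (∑ b ∈ B, f v b) := by
      have h1 : ∑ b ∈ B, ((∑ j ∈ B, f b j) + f b v)
          = ∑ b ∈ B, ((∑ j ∈ B, f j b) + f v b) := by
        refine Finset.sum_congr rfl ?_
        intro b hb
        rw [← hout b hb, ← hin b hb]
        exact hcB b hb
      have h2 : (∑ b ∈ B, ∑ j ∈ B, f b j) = ∑ b ∈ B, ∑ j ∈ B, f j b :=
        Finset.sum_comm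
      rw [Finset.sum_add_distrib, Finset.sum_add_distrib, h2] at h1
      linarith
    -- sums of g for x outside B
    have hgout : ∀ x, x ∉ B → (∑ j, g x j) = (∑ j, f x j) - (∑ j ∈ B, f x j) := by
      intro x hx
      have : (∑ j, g x j) = ∑ j ∈ B, g x j + ∑ j ∈ Bᶜ, g x j :=
        (Finset.sum_add_sum_compl B (g x)).symm
      rw [this]
      have hB0 : ∑ j ∈ B, g x j = 0 :=
        Finset.sum_eq_zero fun j hj => if_pos (Or.inr hj)
      have hBc : ∑ j ∈ Bᶜ, g x j = ∑ j ∈ Bᶜ, f x j :=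
        Finset.sum_congr rfl fun j hj => by
          simp only [hg]
          rw [if_neg]
          push_neg
          exact ⟨hx, Finset.mem_compl.mp hj⟩
      rw [hB0, hBc, zero_add, ← Finset.sum_add_sum_compl B (f x)]
      ring
    have hgin : ∀ x, x ∉ B → (∑ j, g j x) = (∑ j, f j x) - (∑ j ∈ B, f j x) := by
      intro x hx
      have : (∑ j, g j x) = ∑ j ∈ B, g j x + ∑ j ∈ Bᶜ, g j x :=
        (Finset.sum_add_sum_compl B (fun j => g j x)).symm
      rw [this]
      have hB0 : ∑ j ∈ B, g j x = 0 :=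
        Finset.sum_eq_zero fun j hj => if_pos (Or.inl hj)
      have hBc : ∑ j ∈ Bᶜ, g j x = ∑ j ∈ Bᶜ, f j x :=
        Finset.sum_congr rfl fun j hj => by
          simp only [hg]
          rw [if_neg]
          push_neg
          exact ⟨Finset.mem_compl.mp hj, hx⟩
      rw [hB0, hBc, zero_add, ← Finset.sum_add_sum_compl B (fun j => f j x)]
      ring
    -- B-sums balance at any x in insert v A
    have hbal : ∀ x ∈ insert v A, (∑ j ∈ B, f x j) = (∑ j ∈ B, f j x) := by
      intro x hx
      rcases mem_insert.mp hx with h | h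
      · subst h; exact key.symm
      · rw [Finset.sum_eq_zero fun b hb => hfAB x h b hb,
            Finset.sum_eq_zero fun b hb => hfBA x h b hb]
    refine ⟨g, ⟨?_, ?_, ?_, ?_⟩, ?_⟩
    · intro x y
      simp only [hg]
      split
      · exact le_refl 0
      · exact h0 x y
    · intro x y
      simp only [hg]
      split
      · exact hcap x y
      · exact hc x y
    · intro x y hxy
      simp only [hg]
      split
      · rfl
      · next h =>
        push_neg at h
        refine hz x y ?_
        rcases hxy with hx | hy
        · refine Or.inl fun hxS => hx (Finset.mem_erase.mpr ⟨?_, hxS⟩)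
          exact fun he => h.1 (he ▸ hiB)
        · refine Or.inr fun hyS => hy (Finset.mem_erase.mpr ⟨?_, hyS⟩)
          exact fun he => h.2 (he ▸ hiB)
    · intro w hw hws hwt
      rcases hpart w with h | h | h
      · -- w ∈ A
        rw [hgout w (Finset.disjoint_left.mp hAB h),
            hgin w (Finset.disjoint_left.mp hAB h),
            hbal w (mem_insert_of_mem h),
            hcons w (Finset.mem_of_mem_erase hw) hws hwt]
      · -- w ∈ B : everything zero
        rw [Finset.sum_eq_zero fun j _ => if_pos (Or.inl h),
            Finset.sum_eq_zero fun j _ => if_pos (Or.inr h)]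
      · -- w = v
        subst h
        rw [hgout _ hvB, hgin _ hvB, hbal _ (mem_insert_self _ _),
            hcons _ (Finset.mem_of_mem_erase hw) hws hwt]
    · rw [hgout s hsB, hgin s hsB, hbal s hs]
      linarith [hval]
  · rintro ⟨f, ⟨h0, hc, hz, hcons⟩, hval⟩
    refine ⟨f, ⟨h0, hc, ?_, ?_⟩, hval⟩
    · intro x y hxy
      refine hz x y (hxy.imp ?_ ?_)
      · exact fun h hm => h (Finset.mem_of_mem_erase hm)
      · exact fun h hm => h (Finset.mem_of_mem_erase hm)
    · intro w hw hws hwt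
      by_cases hwi : w = i
      · subst hwi
        rw [Finset.sum_eq_zero fun j _ => hz w j (Or.inl (Finset.notMem_erase w S)),
            Finset.sum_eq_zero fun j _ => hz j w (Or.inr (Finset.notMem_erase w S))]
      · exact hcons w (Finset.mem_erase.mpr ⟨hwi, hw⟩) hws hwt

/-- If `v` is a cut vertex (with `v ≠ k`) separating a side `A` containing `k`
from a side `B` containing `i`, then deleting `i` does not change the
contribution of any pair `s, t ∈ A ∪ {v}` to the vitality of `k`. -/
theorem cut_vertex_per_pair_vitality (cap : V → V → ℝ) (hcap : ∀ i j, 0 ≤ cap i j)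
    (k v i : V) (hvk : v ≠ k) (A B : Finset V) (hkA : k ∈ A) (hiB : i ∈ B)
    (hvA : v ∉ A) (hvB : v ∉ B) (hAB : Disjoint A B)
    (hpart : ∀ x : V, x ∈ A ∨ x ∈ B ∨ x = v)
    (hsep : ∀ a ∈ A, ∀ b ∈ B, cap a b = 0 ∧ cap b a = 0)
    (s t : V) (hs : s ∈ insert v A) (ht : t ∈ insert v A) (hst : s ≠ t)
    (hsk : s ≠ k) (htk : t ≠ k) :
    maxFlow cap Finset.univ s t - maxFlow cap (Finset.univ.erase k) s t =
      maxFlow cap (Finset.univ.erase i) s t -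
        maxFlow cap ((Finset.univ.erase i).erase k) s t := by
  have hik : i ≠ k := fun h => Finset.disjoint_left.mp hAB hkA (h ▸ hiB)
  have e1 := flow_set_erase cap hcap v i A B hiB hvB hAB hpart hsep
      Finset.univ (Finset.subset_univ B) s t hs ht
  have hBk : B ⊆ Finset.univ.erase k := fun b hb =>
    Finset.mem_erase.mpr ⟨fun h => Finset.disjoint_left.mp hAB hkA (h ▸ hb),
      Finset.mem_univ b⟩
  have e2 := flow_set_erase cap hcap v i A B hiB hvB hAB hpart hsep
      (Finset.univ.erase k) hBk s t hs ht
  rw [e1, e2, Finset.erase_right_comm]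
end

section
/- Let v be a cut vertex separating G into T1 containing k and T2. Replace, for each t ∈ T2, all edges within T2 by a single edge between t and v of capacity z_{tv}(G) (the original max t-v flow), yielding graph G'. Then for every s ∈ T1 and t ∈ T2 and every removal subset S ⊆ T1 \ {v,k}, the per-pair vitality of k is preserved: z_{st}(G\S) - z_{st}(G\(S∪{k})) = z_{st}(G'\S) - z_{st}(G'\(S∪{k})). -/
open Finset

variable {V : Type*} [Fintype V] [DecidableEq V]

set_option linter.unusedSectionVars false
set_option linter.unusedVariables false
set_option maxHeartbeats 1000000

/-- the set of flow values -/
def flowVals (cap : V → V → ℝ) (A : Finset V) (s t : V) : Set ℝ :=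
  {r | ∃ f, IsFlow cap A s t f ∧ (∑ j, f s j) - (∑ j, f j s) = r}

lemma maxFlow_eq (cap : V → V → ℝ) (A : Finset V) (s t : V) :
    maxFlow cap A s t = sSup (flowVals cap A s t) := rfl

lemma isFlow_zero (cap : V → V → ℝ) (hcap : ∀ i j, 0 ≤ cap i j) (A : Finset V) (s t : V) :
    IsFlow cap A s t (fun _ _ => 0) :=
  ⟨fun _ _ => le_refl 0, fun i j => hcap i j, fun _ _ _ => rfl, fun _ _ _ _ => rfl⟩

lemma zero_mem_flowVals (cap : V → V → ℝ) (hcap : ∀ i j, 0 ≤ cap i j) (A : Finset V) (s t : V) :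
    (0 : ℝ) ∈ flowVals cap A s t :=
  ⟨fun _ _ => 0, isFlow_zero cap hcap A s t, by simp⟩

lemma flowVals_nonempty (cap : V → V → ℝ) (hcap : ∀ i j, 0 ≤ cap i j) (A : Finset V) (s t : V) :
    (flowVals cap A s t).Nonempty :=
  ⟨0, zero_mem_flowVals cap hcap A s t⟩

lemma flowVals_bddAbove (cap : V → V → ℝ) (A : Finset V) (s t : V) :
    BddAbove (flowVals cap A s t) := by
  refine ⟨∑ j, cap s j, ?_⟩
  rintro r ⟨f, hf, rfl⟩
  have h1 : 0 ≤ ∑ j, f j s := Finset.sum_nonneg fun j _ => hf.1 j s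
  have h2 : (∑ j, f s j) ≤ ∑ j, cap s j := Finset.sum_le_sum fun j _ => hf.2.1 s j
  linarith

lemma maxFlow_nonneg (cap : V → V → ℝ) (hcap : ∀ i j, 0 ≤ cap i j) (A : Finset V) (s t : V) :
    0 ≤ maxFlow cap A s t :=
  le_csSup (flowVals_bddAbove cap A s t) (zero_mem_flowVals cap hcap A s t)

/-- net outflow at source equals net inflow at sink -/
lemma net_source_eq_net_sink (cap : V → V → ℝ) (A : Finset V) (s t : V) (hst : s ≠ t)
    (f : V → V → ℝ) (hf : IsFlow cap A s t f) :
    (∑ j, f s j) - (∑ j, f j s) = (∑ j, f j t) - (∑ j, f t j) := by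
  have hnet : ∀ i, i ≠ s → i ≠ t → (∑ j, f i j) - (∑ j, f j i) = 0 := by
    intro i his hit
    by_cases hiA : i ∈ A
    · rw [hf.2.2.2 i hiA his hit]; ring
    · have h1 : ∀ j, f i j = 0 := fun j => hf.2.2.1 i j (Or.inl hiA)
      have h2 : ∀ j, f j i = 0 := fun j => hf.2.2.1 j i (Or.inr hiA)
      simp [h1, h2]
  have hcomm : (∑ i, ∑ j, f j i) = ∑ i, ∑ j, f i j := Finset.sum_comm
  have htot : ∑ i, ((∑ j, f i j) - (∑ j, f j i)) = 0 := by
    rw [Finset.sum_sub_distrib, hcomm, sub_self]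
  have hsub : (∑ i ∈ ({s, t} : Finset V), ((∑ j, f i j) - (∑ j, f j i))) = 0 := by
    rw [Finset.sum_subset (Finset.subset_univ _)
      (fun i _ hi => hnet i (fun h => hi (by simp [h])) (fun h => hi (by simp [h])))]
    exact htot
  rw [Finset.sum_pair hst] at hsub
  linarith

lemma maxFlow_of_source_not_mem (cap : V → V → ℝ) (hcap : ∀ i j, 0 ≤ cap i j)
    (A : Finset V) (s t : V) (hs : s ∉ A) : maxFlow cap A s t = 0 := by
  rw [maxFlow_eq]
  have : flowVals cap A s t = {0} := by
    ext r
    constructor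
    · rintro ⟨f, hf, rfl⟩
      have h1 : ∀ j, f s j = 0 := fun j => hf.2.2.1 s j (Or.inl hs)
      have h2 : ∀ j, f j s = 0 := fun j => hf.2.2.1 j s (Or.inr hs)
      simp [h1, h2]
    · rintro rfl
      exact zero_mem_flowVals cap hcap A s t
  rw [this, csSup_singleton]

/-- Restriction at a cut: if `s ∈ C` and every edge between `A \ C` and
`C \ {s}` has zero capacity, then max flow on `A` equals max flow on `C`. -/
lemma maxFlow_restrict (cap : V → V → ℝ) (hcap : ∀ i j, 0 ≤ cap i j)
    (A C : Finset V) (hCA : C ⊆ A) (s t : V) (hst : s ≠ t) (hsC : s ∈ C) (htC : t ∈ C)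
    (hcross : ∀ a ∈ A, a ∉ C → ∀ b ∈ C, b ≠ s → cap a b = 0 ∧ cap b a = 0) :
    maxFlow cap A s t = maxFlow cap C s t := by
  rw [maxFlow_eq, maxFlow_eq]
  apply le_antisymm
  · apply csSup_le (flowVals_nonempty cap hcap A s t)
    rintro r ⟨f, hf, rfl⟩
    set g : V → V → ℝ := fun i j => if i ∈ C ∧ j ∈ C then f i j else 0 with hgdef
    -- edges between non-C and C \ {s} carry no flow
    have hez : ∀ i ∈ C, i ≠ s → ∀ j, j ∉ C → f i j = 0 ∧ f j i = 0 := by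
      intro i hi his j hj
      by_cases hjA : j ∈ A
      · have hc := hcross j hjA hj i hi his
        exact ⟨le_antisymm ((hf.2.1 i j).trans (le_of_eq hc.2)) (hf.1 i j),
               le_antisymm ((hf.2.1 j i).trans (le_of_eq hc.1)) (hf.1 j i)⟩
      · exact ⟨hf.2.2.1 i j (Or.inr hjA), hf.2.2.1 j i (Or.inl hjA)⟩
    have hrow : ∀ i ∈ C, i ≠ s → (∑ j, g i j) = ∑ j, f i j := by
      intro i hi his
      refine Finset.sum_congr rfl fun j _ => ?_
      by_cases hj : j ∈ C
      · simp [hgdef, hi, hj]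
      · simp [hgdef, hj, (hez i hi his j hj).1]
    have hcol : ∀ i ∈ C, i ≠ s → (∑ j, g j i) = ∑ j, f j i := by
      intro i hi his
      refine Finset.sum_congr rfl fun j _ => ?_
      by_cases hj : j ∈ C
      · simp [hgdef, hi, hj]
      · simp [hgdef, hj, (hez i hi his j hj).2]
    have hgflow : IsFlow cap C s t g := by
      refine ⟨fun i j => ?_, fun i j => ?_, fun i j h => ?_, fun i hi his hit => ?_⟩
      · by_cases h : i ∈ C ∧ j ∈ C <;> simp [hgdef, h, hf.1 i j]
      · by_cases h : i ∈ C ∧ j ∈ C <;> simp [hgdef, h, hf.2.1 i j, hcap i j]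
      · have : ¬ (i ∈ C ∧ j ∈ C) := by tauto
        simp [hgdef, this]
      · rw [hrow i hi his, hcol i hi his]
        exact hf.2.2.2 i (hCA hi) his hit
    refine le_csSup (flowVals_bddAbove cap C s t) ⟨g, hgflow, ?_⟩
    rw [net_source_eq_net_sink cap C s t hst g hgflow,
        hcol t htC (Ne.symm hst), hrow t htC (Ne.symm hst)]
    exact (net_source_eq_net_sink cap A s t hst f hf).symm
  · apply csSup_le (flowVals_nonempty cap hcap C s t)
    rintro r ⟨g, hg, rfl⟩
    refine le_csSup (flowVals_bddAbove cap A s t) ⟨g, ?_, rfl⟩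
    refine ⟨hg.1, hg.2.1, fun i j h => ?_, fun i hi his hit => ?_⟩
    · refine hg.2.2.1 i j ?_
      rcases h with h | h
      · exact Or.inl fun hc => h (hCA hc)
      · exact Or.inr fun hc => h (hCA hc)
    · by_cases hiC : i ∈ C
      · exact hg.2.2.2 i hiC his hit
      · have h1 : ∀ j, g i j = 0 := fun j => hg.2.2.1 i j (Or.inl hiC)
        have h2 : ∀ j, g j i = 0 := fun j => hg.2.2.1 j i (Or.inr hiC)
        simp [h1, h2]

lemma maxFlow_pendant (cap' : V → V → ℝ) (hcap' : ∀ i j, 0 ≤ cap' i j)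
    (C : Finset V) (v t : V) (hvt : v ≠ t) (hvC : v ∈ C) (htC : t ∈ C)
    (hz : ∀ x, x ≠ v → cap' x t = 0) :
    maxFlow cap' C v t = cap' v t := by
  rw [maxFlow_eq]
  apply le_antisymm
  · apply csSup_le (flowVals_nonempty cap' hcap' C v t)
    rintro r ⟨f, hf, rfl⟩
    rw [net_source_eq_net_sink cap' C v t hvt f hf]
    have h1 : ∀ j, j ≠ v → f j t = 0 :=
      fun j hj => le_antisymm ((hf.2.1 j t).trans (le_of_eq (hz j hj))) (hf.1 j t)
    have h2 : (∑ j, f j t) = f v t := by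
      rw [Finset.sum_eq_single v (fun j _ hj => h1 j hj) (fun h => absurd (mem_univ v) h)]
    have h3 : 0 ≤ ∑ j, f t j := Finset.sum_nonneg fun j _ => hf.1 t j
    have h4 : f v t ≤ cap' v t := hf.2.1 v t
    linarith
  · set f : V → V → ℝ := fun i j => if i = v ∧ j = t then cap' v t else 0 with hfdef
    have hfflow : IsFlow cap' C v t f := by
      refine ⟨fun i j => ?_, fun i j => ?_, fun i j h => ?_, fun i hi hiv hit => ?_⟩
      · by_cases h : i = v ∧ j = t <;> simp [hfdef, h, hcap' v t]
      · by_cases h : i = v ∧ j = t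
        · simp [hfdef, h, h.1, h.2]
        · simp [hfdef, h, hcap' i j]
      · have : ¬ (i = v ∧ j = t) := by rintro ⟨rfl, rfl⟩; tauto
        simp [hfdef, this]
      · have h1 : ∀ j, f i j = 0 := by intro j; simp [hfdef]; tauto
        have h2 : ∀ j, f j i = 0 := by intro j; simp [hfdef]; tauto
        simp [h1, h2]
    refine le_csSup (flowVals_bddAbove cap' C v t) ⟨f, hfflow, ?_⟩
    have h1 : (∑ j, f v j) = cap' v t := by
      rw [Finset.sum_eq_single t (fun j _ hj => by simp [hfdef, hj])
        (fun h => absurd (mem_univ t) h)]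
      simp [hfdef]
    have h2 : ∀ j, f j v = 0 := by
      intro j; simp [hfdef]; rintro - rfl; exact absurd rfl hvt
    simp [h1, h2]

lemma maxFlow_congr (cap cap' : V → V → ℝ) (hcap : ∀ i j, 0 ≤ cap i j)
    (hcap' : ∀ i j, 0 ≤ cap' i j) (A : Finset V)
    (h : ∀ a ∈ A, ∀ b ∈ A, cap' a b = cap a b) (s t : V) :
    maxFlow cap A s t = maxFlow cap' A s t := by
  have key : ∀ (c c' : V → V → ℝ), (∀ i j, 0 ≤ c' i j) →
      (∀ a ∈ A, ∀ b ∈ A, c' a b = c a b) → ∀ f, IsFlow c A s t f → IsFlow c' A s t f := by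
    intro c c' hc' hcc f hf
    refine ⟨hf.1, fun i j => ?_, hf.2.2.1, hf.2.2.2⟩
    by_cases hi : i ∈ A
    · by_cases hj : j ∈ A
      · rw [hcc i hi j hj]; exact hf.2.1 i j
      · rw [hf.2.2.1 i j (Or.inr hj)]; exact hc' i j
    · rw [hf.2.2.1 i j (Or.inl hi)]; exact hc' i j
  rw [maxFlow_eq, maxFlow_eq]
  congr 1
  ext r
  constructor
  · rintro ⟨f, hf, rfl⟩; exact ⟨f, key cap cap' hcap' h f hf, rfl⟩
  · rintro ⟨f, hf, rfl⟩
    exact ⟨f, key cap' cap hcap (fun a ha b hb => (h a ha b hb).symm) f hf, rfl⟩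

/-- Gluing at a cut vertex `v`: max `s`-`t` flow on `B ∪ C` equals the min of
the `s`-`v` flow on `B` and the `v`-`t` flow on `C`. -/
lemma maxFlow_glue (cap : V → V → ℝ) (hcap : ∀ i j, 0 ≤ cap i j)
    (B C : Finset V) (v s t : V)
    (hBC : ∀ x ∈ B, x ∈ C → x = v) (hvB : v ∈ B) (hvC : v ∈ C)
    (hsB : s ∈ B) (hsv : s ≠ v) (htC : t ∈ C) (htv : t ≠ v)
    (hcross : ∀ a ∈ B, a ≠ v → ∀ b ∈ C, b ≠ v → cap a b = 0 ∧ cap b a = 0) :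
    maxFlow cap (B ∪ C) s t = min (maxFlow cap B s v) (maxFlow cap C v t) := by
  have hsC : s ∉ C := fun h => hsv (hBC s hsB h)
  have htB : t ∉ B := fun h => htv (hBC t h htC)
  have hst : s ≠ t := fun h => hsC (h ▸ htC)
  apply le_antisymm
  · rw [maxFlow_eq]
    apply csSup_le (flowVals_nonempty cap hcap _ s t)
    rintro r ⟨f, hf, rfl⟩
    have hcz : ∀ a ∈ B, a ≠ v → ∀ b ∈ C, b ≠ v → f a b = 0 ∧ f b a = 0 := by
      intro a ha hav b hb hbv
      have hc := hcross a ha hav b hb hbv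
      exact ⟨le_antisymm ((hf.2.1 a b).trans (le_of_eq hc.1)) (hf.1 a b),
             le_antisymm ((hf.2.1 b a).trans (le_of_eq hc.2)) (hf.1 b a)⟩
    apply le_min
    · set g : V → V → ℝ := fun i j => if i ∈ B ∧ j ∈ B then f i j else 0 with hgdef
      have hez : ∀ i ∈ B, i ≠ v → ∀ j, j ∉ B → f i j = 0 ∧ f j i = 0 := by
        intro i hi hiv j hj
        by_cases hjC : j ∈ C
        · have hjv : j ≠ v := fun h => hj (h ▸ hvB)
          exact hcz i hi hiv j hjC hjv
        · exact ⟨hf.2.2.1 i j (Or.inr (by simp [hj, hjC])),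
                 hf.2.2.1 j i (Or.inl (by simp [hj, hjC]))⟩
      have hrow : ∀ i ∈ B, i ≠ v → (∑ j, g i j) = ∑ j, f i j := by
        intro i hi hiv
        refine Finset.sum_congr rfl fun j _ => ?_
        by_cases hj : j ∈ B
        · simp [hgdef, hi, hj]
        · simp [hgdef, hj, (hez i hi hiv j hj).1]
      have hcol : ∀ i ∈ B, i ≠ v → (∑ j, g j i) = ∑ j, f j i := by
        intro i hi hiv
        refine Finset.sum_congr rfl fun j _ => ?_
        by_cases hj : j ∈ B
        · simp [hgdef, hi, hj]
        · simp [hgdef, hj, (hez i hi hiv j hj).2]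
      have hgflow : IsFlow cap B s v g := by
        refine ⟨fun i j => ?_, fun i j => ?_, fun i j h => ?_, fun i hi his hiv => ?_⟩
        · by_cases h : i ∈ B ∧ j ∈ B <;> simp [hgdef, h, hf.1 i j]
        · by_cases h : i ∈ B ∧ j ∈ B <;> simp [hgdef, h, hf.2.1 i j, hcap i j]
        · have : ¬ (i ∈ B ∧ j ∈ B) := by tauto
          simp [hgdef, this]
        · rw [hrow i hi hiv, hcol i hi hiv]
          exact hf.2.2.2 i (mem_union_left _ hi) his (fun h => htB (h ▸ hi))
      rw [maxFlow_eq]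
      refine le_csSup (flowVals_bddAbove _ _ _ _) ⟨g, hgflow, ?_⟩
      rw [hrow s hsB hsv, hcol s hsB hsv]
    · set g : V → V → ℝ := fun i j => if i ∈ C ∧ j ∈ C then f i j else 0 with hgdef
      have hez : ∀ i ∈ C, i ≠ v → ∀ j, j ∉ C → f i j = 0 ∧ f j i = 0 := by
        intro i hi hiv j hj
        by_cases hjB : j ∈ B
        · have hjv : j ≠ v := fun h => hj (h ▸ hvC)
          exact ⟨(hcz j hjB hjv i hi hiv).2, (hcz j hjB hjv i hi hiv).1⟩
        · exact ⟨hf.2.2.1 i j (Or.inr (by simp [hj, hjB])),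
                 hf.2.2.1 j i (Or.inl (by simp [hj, hjB]))⟩
      have hrow : ∀ i ∈ C, i ≠ v → (∑ j, g i j) = ∑ j, f i j := by
        intro i hi hiv
        refine Finset.sum_congr rfl fun j _ => ?_
        by_cases hj : j ∈ C
        · simp [hgdef, hi, hj]
        · simp [hgdef, hj, (hez i hi hiv j hj).1]
      have hcol : ∀ i ∈ C, i ≠ v → (∑ j, g j i) = ∑ j, f j i := by
        intro i hi hiv
        refine Finset.sum_congr rfl fun j _ => ?_
        by_cases hj : j ∈ C
        · simp [hgdef, hi, hj]
        · simp [hgdef, hj, (hez i hi hiv j hj).2]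
      have hgflow : IsFlow cap C v t g := by
        refine ⟨fun i j => ?_, fun i j => ?_, fun i j h => ?_, fun i hi hiv hit => ?_⟩
        · by_cases h : i ∈ C ∧ j ∈ C <;> simp [hgdef, h, hf.1 i j]
        · by_cases h : i ∈ C ∧ j ∈ C <;> simp [hgdef, h, hf.2.1 i j, hcap i j]
        · have : ¬ (i ∈ C ∧ j ∈ C) := by tauto
          simp [hgdef, this]
        · rw [hrow i hi hiv, hcol i hi hiv]
          exact hf.2.2.2 i (mem_union_right _ hi) (fun h => hsC (h ▸ hi)) hit
      rw [maxFlow_eq]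
      refine le_csSup (flowVals_bddAbove _ _ _ _) ⟨g, hgflow, ?_⟩
      rw [net_source_eq_net_sink cap C v t (Ne.symm htv) g hgflow,
          hcol t htC htv, hrow t htC htv]
      exact (net_source_eq_net_sink cap (B ∪ C) s t hst f hf).symm
  · by_contra hlt
    push_neg at hlt
    set M := maxFlow cap (B ∪ C) s t with hM
    have hM0 : 0 ≤ M := maxFlow_nonneg cap hcap _ s t
    obtain ⟨haM, hbM⟩ := lt_min_iff.mp hlt
    rw [maxFlow_eq] at haM hbM
    obtain ⟨x, ⟨g, hg, hgx⟩, hMx⟩ :=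
      exists_lt_of_lt_csSup (flowVals_nonempty cap hcap B s v) haM
    obtain ⟨y, ⟨h, hh, hhy⟩, hMy⟩ :=
      exists_lt_of_lt_csSup (flowVals_nonempty cap hcap C v t) hbM
    have hx0 : 0 < x := lt_of_le_of_lt hM0 hMx
    have hy0 : 0 < y := lt_of_le_of_lt hM0 hMy
    set m := min x y with hmdef
    have hm0 : 0 < m := lt_min hx0 hy0
    have hmM : M < m := lt_min hMx hMy
    suffices hfin : m ≤ M by linarith
    set α := m / x with hαdef
    set β := m / y with hβdef
    have hα0 : 0 ≤ α := le_of_lt (div_pos hm0 hx0)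
    have hβ0 : 0 ≤ β := le_of_lt (div_pos hm0 hy0)
    have hα1 : α ≤ 1 := (div_le_one hx0).mpr (min_le_left x y)
    have hβ1 : β ≤ 1 := (div_le_one hy0).mpr (min_le_right x y)
    have hax : α * x = m := div_mul_cancel₀ m (ne_of_gt hx0)
    have hby : β * y = m := div_mul_cancel₀ m (ne_of_gt hy0)
    set D := α * g v v + β * h v v with hD
    set f : V → V → ℝ :=
      fun i j => α * g i j + β * h i j - (if i = v ∧ j = v then D else 0) with hfdef
    have hgB : ∀ i j, i ∉ B ∨ j ∉ B → g i j = 0 := hg.2.2.1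
    have hhC : ∀ i j, i ∉ C ∨ j ∉ C → h i j = 0 := hh.2.2.1
    have hfvv : f v v = 0 := by simp [hfdef, hD]
    have hfne : ∀ i j, ¬(i = v ∧ j = v) → f i j = α * g i j + β * h i j := by
      intro i j hij; simp [hfdef, hij]
    have hsupp : ∀ i j, ¬(i = v ∧ j = v) → g i j = 0 ∨ h i j = 0 := by
      intro i j hij
      by_cases hiB : i ∈ B
      · by_cases hjB : j ∈ B
        · right
          by_cases hiC : i ∈ C
          · by_cases hjC : j ∈ C
            · exact absurd ⟨hBC i hiB hiC, hBC j hjB hjC⟩ hij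
            · exact hhC i j (Or.inr hjC)
          · exact hhC i j (Or.inl hiC)
        · exact Or.inl (hgB i j (Or.inr hjB))
      · exact Or.inl (hgB i j (Or.inl hiB))
    have hrowf : ∀ i, (∑ j, f i j)
        = α * (∑ j, g i j) + β * (∑ j, h i j) - (if i = v then D else 0) := by
      intro i
      have hpt : ∀ j, f i j
          = (α * g i j + β * h i j) - (if i = v then (if j = v then D else 0) else 0) := by
        intro j
        by_cases hi : i = v <;> by_cases hj : j = v <;> simp [hfdef, hi, hj]
      simp_rw [hpt]
      rw [Finset.sum_sub_distrib, Finset.sum_add_distrib, ← Finset.mul_sum, ← Finset.mul_sum]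
      congr 1
      by_cases hi : i = v <;> simp [hi]
    have hcolf : ∀ i, (∑ j, f j i)
        = α * (∑ j, g j i) + β * (∑ j, h j i) - (if i = v then D else 0) := by
      intro i
      have hpt : ∀ j, f j i
          = (α * g j i + β * h j i) - (if j = v then (if i = v then D else 0) else 0) := by
        intro j
        by_cases hi : i = v <;> by_cases hj : j = v <;> simp [hfdef, hi, hj]
      simp_rw [hpt]
      rw [Finset.sum_sub_distrib, Finset.sum_add_distrib, ← Finset.mul_sum, ← Finset.mul_sum]
      congr 1
      by_cases hi : i = v <;> simp [hi]
    have hsink_g : (∑ j, g j v) - (∑ j, g v j) = x := by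
      have := net_source_eq_net_sink cap B s v hsv g hg
      linarith
    have hfflow : IsFlow cap (B ∪ C) s t f := by
      refine ⟨fun i j => ?_, fun i j => ?_, fun i j hij => ?_, fun i hi his hit => ?_⟩
      · by_cases hij : i = v ∧ j = v
        · rw [hij.1, hij.2, hfvv]
        · rw [hfne i j hij]
          have h1 := mul_nonneg hα0 (hg.1 i j)
          have h2 := mul_nonneg hβ0 (hh.1 i j)
          linarith
      · by_cases hij : i = v ∧ j = v
        · rw [hij.1, hij.2, hfvv]; exact hcap v v
        · rw [hfne i j hij]
          rcases hsupp i j hij with hz | hz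
          · rw [hz, mul_zero, zero_add]
            exact le_trans (mul_le_of_le_one_left (hh.1 i j) hβ1) (hh.2.1 i j)
          · rw [hz, mul_zero, add_zero]
            exact le_trans (mul_le_of_le_one_left (hg.1 i j) hα1) (hg.2.1 i j)
      · have hiB : i ∉ B ∨ j ∉ B := by
          rcases hij with hq | hq
          · exact Or.inl fun hb => hq (mem_union_left _ hb)
          · exact Or.inr fun hb => hq (mem_union_left _ hb)
        have hiC : i ∉ C ∨ j ∉ C := by
          rcases hij with hq | hq
          · exact Or.inl fun hb => hq (mem_union_right _ hb)
          · exact Or.inr fun hb => hq (mem_union_right _ hb)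
        have hnv : ¬(i = v ∧ j = v) := by
          rintro ⟨rfl, rfl⟩
          rcases hij with hq | hq <;> exact hq (mem_union_left _ hvB)
        rw [hfne i j hnv, hgB i j hiB, hhC i j hiC]
        ring
      · rw [hrowf i, hcolf i]
        by_cases hiv : i = v
        · subst hiv
          have e1 : α * (∑ j, g i j) - α * (∑ j, g j i) = -m := by
            rw [← mul_sub]
            have : (∑ j, g i j) - (∑ j, g j i) = -x := by linarith [hsink_g]
            rw [this, mul_neg, hax]
          have e2 : β * (∑ j, h i j) - β * (∑ j, h j i) = m := by
            rw [← mul_sub, hhy, hby]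
          simp only [if_pos rfl]
          linarith
        · simp only [if_neg hiv]
          by_cases hiB : i ∈ B
          · have hiC : i ∉ C := fun hc => hiv (hBC i hiB hc)
            have hgc : (∑ j, g i j) = ∑ j, g j i := hg.2.2.2 i hiB his hiv
            have hh1 : ∀ j, h i j = 0 := fun j => hhC i j (Or.inl hiC)
            have hh2 : ∀ j, h j i = 0 := fun j => hhC j i (Or.inr hiC)
            rw [hgc]
            simp [hh1, hh2]
          · have hiC : i ∈ C := by
              rcases mem_union.mp hi with hq | hq
              exacts [absurd hq hiB, hq]
            have hhc : (∑ j, h i j) = ∑ j, h j i := hh.2.2.2 i hiC hiv hit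
            have hg1 : ∀ j, g i j = 0 := fun j => hgB i j (Or.inl hiB)
            have hg2 : ∀ j, g j i = 0 := fun j => hgB j i (Or.inr hiB)
            rw [hhc]
            simp [hg1, hg2]
    have hval : (∑ j, f s j) - (∑ j, f j s) = m := by
      rw [hrowf s, hcolf s]
      simp only [if_neg hsv]
      have hh1 : ∀ j, h s j = 0 := fun j => hhC s j (Or.inl hsC)
      have hh2 : ∀ j, h j s = 0 := fun j => hhC j s (Or.inr hsC)
      have e1 : α * (∑ j, g s j) - α * (∑ j, g j s) = m := by
        rw [← mul_sub, hgx, hax]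
      simp only [hh1, hh2, Finset.sum_const_zero, mul_zero]
      linarith
    rw [hM, maxFlow_eq]
    exact le_csSup (flowVals_bddAbove _ _ _ _) ⟨f, hfflow, hval⟩

/-- Graph simplification at a cut vertex `v` preserves per-pair vitality:
replacing the interior of the side `T2` by pendant edges to `v` of capacity
equal to the original max flow to/from `v` does not change
`z_{st}(G\S) - z_{st}(G\(S∪{k}))` for `s ∈ T1`, `t ∈ T2`. -/
theorem simplification_preserves_per_pair_vitality (cap cap' : V → V → ℝ)
    (hcap : ∀ i j, 0 ≤ cap i j)
    (k v : V) (T1 T2 : Finset V) (hkT1 : k ∈ T1) (hvT1 : v ∈ T1) (hkv : k ≠ v)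
    (hdisj : Disjoint T1 T2) (hpart : T1 ∪ T2 = Finset.univ)
    (hsep : ∀ a ∈ T1, a ≠ v → ∀ b ∈ T2, cap a b = 0 ∧ cap b a = 0)
    -- `cap'` agrees with `cap` on the side `T1` (which contains `v`)
    (hsame : ∀ a ∈ T1, ∀ b ∈ T1, cap' a b = cap a b)
    -- every `t ∈ T2` is joined to `v` by a single edge of capacity equal to the
    -- original maximum flow between `t` and `v`
    (hpend : ∀ t ∈ T2, cap' t v = maxFlow cap Finset.univ t v ∧
      cap' v t = maxFlow cap Finset.univ v t)
    -- all other edges touching `T2` are removed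
    (hzero : ∀ t ∈ T2, ∀ x : V, x ≠ v → cap' t x = 0 ∧ cap' x t = 0) :
    ∀ s ∈ T1, ∀ t ∈ T2, ∀ S : Finset V, S ⊆ (T1.erase v).erase k →
      s ∉ S →
      maxFlow cap (Finset.univ \ S) s t -
          maxFlow cap ((Finset.univ \ S).erase k) s t =
        maxFlow cap' (Finset.univ \ S) s t -
          maxFlow cap' ((Finset.univ \ S).erase k) s t := by
  intro s hs t ht S hS hsS
  have hvS : v ∉ S := fun h => (Finset.mem_erase.mp (Finset.mem_erase.mp (hS h)).2).1 rfl
  have hkS : k ∉ S := fun h => (Finset.mem_erase.mp (hS h)).1 rfl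
  have hST1 : S ⊆ T1 := hS.trans ((Finset.erase_subset _ _).trans (Finset.erase_subset _ _))
  have hvT2 : v ∉ T2 := Finset.disjoint_left.mp hdisj hvT1
  have hkT2 : k ∉ T2 := Finset.disjoint_left.mp hdisj hkT1
  have htv : t ≠ v := fun h => hvT2 (h ▸ ht)
  have hTT : ∀ x : V, x ∈ T1 ∨ x ∈ T2 := by
    intro x
    have : x ∈ T1 ∪ T2 := by rw [hpart]; exact Finset.mem_univ x
    exact Finset.mem_union.mp this
  have hcap' : ∀ i j, 0 ≤ cap' i j := by
    intro i j
    by_cases hiT2 : i ∈ T2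
    · by_cases hjv : j = v
      · rw [hjv, (hpend i hiT2).1]; exact maxFlow_nonneg cap hcap _ _ _
      · rw [(hzero i hiT2 j hjv).1]
    · have hiT1 : i ∈ T1 := (hTT i).resolve_right hiT2
      by_cases hjT2 : j ∈ T2
      · by_cases hiv : i = v
        · rw [hiv, (hpend j hjT2).2]; exact maxFlow_nonneg cap hcap _ _ _
        · rw [(hzero j hjT2 i hiv).2]
      · have hjT1 : j ∈ T1 := (hTT j).resolve_right hjT2
        rw [hsame i hiT1 j hjT1]; exact hcap i j
  set C : Finset V := insert v T2 with hC
  have hvC : v ∈ C := Finset.mem_insert_self v T2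
  have htC : t ∈ C := Finset.mem_insert_of_mem ht
  have hmemC : ∀ b ∈ C, b ≠ v → b ∈ T2 := fun b hb hbv => (Finset.mem_insert.mp hb).resolve_left hbv
  have hT1C : ∀ x ∈ T1, x ∈ C → x = v := by
    intro x hx hxC
    rcases Finset.mem_insert.mp hxC with h | h
    · exact h
    · exact absurd h (Finset.disjoint_left.mp hdisj hx)
  have hMuniv : maxFlow cap Finset.univ v t = maxFlow cap C v t := by
    apply maxFlow_restrict cap hcap _ C (Finset.subset_univ _) v t (Ne.symm htv) hvC htC
    intro a _ haC b hb hbv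
    have haT1 : a ∈ T1 := (hTT a).resolve_right (fun h2 => haC (Finset.mem_insert_of_mem h2))
    have hav : a ≠ v := fun h => haC (h ▸ hvC)
    exact hsep a haT1 hav b (hmemC b hb hbv)
  have hPend' : maxFlow cap' C v t = cap' v t :=
    maxFlow_pendant cap' hcap' C v t (Ne.symm htv) hvC htC (fun x hx => (hzero t ht x hx).2)
  have hcapvt : cap' v t = maxFlow cap C v t := ((hpend t ht).2).trans hMuniv
  have step : ∀ B : Finset V, B ⊆ T1 → v ∈ B →
      maxFlow cap (B ∪ C) s t = maxFlow cap' (B ∪ C) s t := by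
    intro B hBT1 hvB
    have hBCv : ∀ x ∈ B, x ∈ C → x = v := fun x hx => hT1C x (hBT1 hx)
    have hcross1 : ∀ a ∈ B, a ≠ v → ∀ b ∈ C, b ≠ v → cap a b = 0 ∧ cap b a = 0 :=
      fun a ha hav b hb hbv => hsep a (hBT1 ha) hav b (hmemC b hb hbv)
    have hcross2 : ∀ a ∈ B, a ≠ v → ∀ b ∈ C, b ≠ v → cap' a b = 0 ∧ cap' b a = 0 := by
      intro a ha hav b hb hbv
      have hb2 := hmemC b hb hbv
      exact ⟨(hzero b hb2 a hav).2, (hzero b hb2 a hav).1⟩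
    have hcrossA : ∀ a ∈ B ∪ C, a ∉ C → ∀ b ∈ C, b ≠ v → cap a b = 0 ∧ cap b a = 0 := by
      intro a ha haC b hb hbv
      have haB : a ∈ B := (Finset.mem_union.mp ha).resolve_right haC
      exact hcross1 a haB (fun h => haC (h ▸ hvC)) b hb hbv
    have hcrossA' : ∀ a ∈ B ∪ C, a ∉ C → ∀ b ∈ C, b ≠ v → cap' a b = 0 ∧ cap' b a = 0 := by
      intro a ha haC b hb hbv
      have haB : a ∈ B := (Finset.mem_union.mp ha).resolve_right haC
      exact hcross2 a haB (fun h => haC (h ▸ hvC)) b hb hbv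
    by_cases hsv : s = v
    · rw [hsv]
      rw [maxFlow_restrict cap hcap (B ∪ C) C Finset.subset_union_right v t
            (Ne.symm htv) hvC htC hcrossA,
          maxFlow_restrict cap' hcap' (B ∪ C) C Finset.subset_union_right v t
            (Ne.symm htv) hvC htC hcrossA',
          hPend', hcapvt]
    · by_cases hsA : s ∈ B ∪ C
      · have hsB : s ∈ B := by
          rcases Finset.mem_union.mp hsA with hq | hq
          · exact hq
          · exact absurd (hT1C s hs hq) hsv
        rw [maxFlow_glue cap hcap B C v s t hBCv hvB hvC hsB hsv htC htv hcross1,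
            maxFlow_glue cap' hcap' B C v s t hBCv hvB hvC hsB hsv htC htv hcross2,
            maxFlow_congr cap cap' hcap hcap' B
              (fun a ha b hb => hsame a (hBT1 ha) b (hBT1 hb)) s v,
            hPend', hcapvt]
      · rw [maxFlow_of_source_not_mem cap hcap _ s t hsA,
            maxFlow_of_source_not_mem cap' hcap' _ s t hsA]
  have hA1 : Finset.univ \ S = (T1 \ S) ∪ C := by
    ext x
    simp only [Finset.mem_sdiff, Finset.mem_univ, true_and, Finset.mem_union, hC,
      Finset.mem_insert]
    constructor
    · intro hxS
      rcases hTT x with h | h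
      · exact Or.inl ⟨h, hxS⟩
      · exact Or.inr (Or.inr h)
    · rintro (⟨h1, h2⟩ | h | h)
      · exact h2
      · exact h ▸ hvS
      · exact fun hxS => (Finset.disjoint_left.mp hdisj (hST1 hxS)) h
  have hA2 : (Finset.univ \ S).erase k = ((T1 \ S).erase k) ∪ C := by
    ext x
    simp only [Finset.mem_erase, Finset.mem_sdiff, Finset.mem_univ, true_and,
      Finset.mem_union, hC, Finset.mem_insert]
    constructor
    · rintro ⟨hxk, hxS⟩
      rcases hTT x with h | h
      · exact Or.inl ⟨hxk, h, hxS⟩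
      · exact Or.inr (Or.inr h)
    · rintro (⟨h1, h2, h3⟩ | h | h)
      · exact ⟨h1, h3⟩
      · exact h ▸ ⟨Ne.symm hkv, hvS⟩
      · exact ⟨fun he => hkT2 (he ▸ h), fun hxS => (Finset.disjoint_left.mp hdisj (hST1 hxS)) h⟩
  have hv1 : v ∈ T1 \ S := Finset.mem_sdiff.mpr ⟨hvT1, hvS⟩
  have hv2 : v ∈ (T1 \ S).erase k := Finset.mem_erase.mpr ⟨Ne.symm hkv, hv1⟩
  rw [hA2, hA1, step (T1 \ S) Finset.sdiff_subset hv1,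
      step ((T1 \ S).erase k) ((Finset.erase_subset _ _).trans Finset.sdiff_subset) hv2]
end

section
/- Let v be a cut vertex separating G into T1 containing k and T2. Then for all s, t ∈ T2 and any removal subset S ⊆ T1 \ {v, k}, the pair (s,t) contributes zero to the vitality of k: z_{st}(G \ S) = z_{st}(G \ (S ∪ {k})). -/
open Finset

variable {V : Type*} [Fintype V] [DecidableEq V]

/-- If `v` is a cut vertex separating `T1 ∋ k, v` from `T2`, then for any
removal subset `S ⊆ T1 \ {v, k}` and any `s, t ∈ T2`, the pair `(s,t)`
contributes zero to the vitality of `k`. -/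
theorem cut_vertex_pair_contributes_zero (cap : V → V → ℝ)
    (hcap : ∀ i j, 0 ≤ cap i j)
    (k v : V) (T1 T2 : Finset V) (hkT1 : k ∈ T1) (hvT1 : v ∈ T1) (hkv : k ≠ v)
    (hdisj : Disjoint T1 T2) (hpart : T1 ∪ T2 = Finset.univ)
    (hsep : ∀ a ∈ T1, a ≠ v → ∀ b ∈ T2, cap a b = 0 ∧ cap b a = 0)
    (S : Finset V) (hS : S ⊆ (T1.erase v).erase k)
    (s t : V) (hs : s ∈ T2) (ht : t ∈ T2) (hst : s ≠ t) :
    maxFlow cap (Finset.univ \ S) s t =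
      maxFlow cap ((Finset.univ \ S).erase k) s t := by
  classical
  set A : Finset V := Finset.univ \ S with hA
  have hmemA : ∀ x : V, x ∈ A ↔ x ∉ S := fun x => by simp [hA]
  have hST1 : S ⊆ T1 := hS.trans ((Finset.erase_subset _ _).trans (Finset.erase_subset _ _))
  have hkS : k ∉ S := fun h => (Finset.mem_erase.mp (hS h)).1 rfl
  have hvS : v ∉ S := fun h =>
    (Finset.mem_erase.mp (Finset.mem_of_mem_erase (hS h))).1 rfl
  have hkT2 : k ∉ T2 := fun h => (Finset.disjoint_left.mp hdisj hkT1) h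
  have hvT2 : v ∉ T2 := fun h => (Finset.disjoint_left.mp hdisj hvT1) h
  have hT2A : ∀ b ∈ T2, b ∈ A := fun b hb =>
    (hmemA b).mpr (fun hbS => (Finset.disjoint_left.mp hdisj (hST1 hbS)) hb)
  set B : Finset V := insert v T2 with hB
  set C : Finset V := T1.erase v with hC
  have hkB : k ∉ B := by
    simp only [hB, Finset.mem_insert, not_or]
    exact ⟨hkv, hkT2⟩
  have hsB : s ∈ B := Finset.mem_insert_of_mem hs
  have hdisjCB : Disjoint C B := by
    rw [Finset.disjoint_left]
    intro a haC haB
    obtain ⟨hav, haT1⟩ := Finset.mem_erase.mp haC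
    rcases Finset.mem_insert.mp haB with h | h
    · exact hav h
    · exact (Finset.disjoint_left.mp hdisj haT1) h
  have hunion : C ∪ B = Finset.univ := by
    apply Finset.eq_univ_of_forall
    intro x
    have hx : x ∈ T1 ∪ T2 := hpart ▸ Finset.mem_univ x
    rcases Finset.mem_union.mp hx with h | h
    · by_cases hxv : x = v
      · exact Finset.mem_union_right _ (hxv ▸ Finset.mem_insert_self v T2)
      · exact Finset.mem_union_left _ (Finset.mem_erase.mpr ⟨hxv, h⟩)
    · exact Finset.mem_union_right _ (Finset.mem_insert_of_mem h)
  have hsplit : ∀ g : V → ℝ, ∑ j, g j = ∑ j ∈ C, g j + ∑ j ∈ B, g j := by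
    intro g
    rw [← hunion, Finset.sum_union hdisjCB]
  have hsT1 : s ∉ T1 := fun h => (Finset.disjoint_left.mp hdisj h) hs
  have htT1 : t ∉ T1 := fun h => (Finset.disjoint_left.mp hdisj h) ht
  unfold maxFlow
  congr 1
  ext r
  simp only [Set.mem_setOf_eq]
  constructor
  · rintro ⟨f, hf, hval⟩
    obtain ⟨hf0, hfc, hfz, hfcons⟩ := hf
    -- zero flow between T1 \ {v} and T2
    have hz1 : ∀ i ∈ C, ∀ j ∈ T2, f i j = 0 ∧ f j i = 0 := by
      intro i hi j hj
      obtain ⟨hiv, hiT1⟩ := Finset.mem_erase.mp hi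
      obtain ⟨h1, h2⟩ := hsep i hiT1 hiv j hj
      exact ⟨le_antisymm (h1 ▸ hfc i j) (hf0 i j),
        le_antisymm (h2 ▸ hfc j i) (hf0 j i)⟩
    -- rows/cols outside B vanish for T2 vertices
    have hz2 : ∀ i ∈ T2, ∀ j, j ∉ B → f i j = 0 ∧ f j i = 0 := by
      intro i hi j hj
      have hjC : j ∈ C := by
        have hj' : j ∈ C ∪ B := hunion ▸ Finset.mem_univ j
        rcases Finset.mem_union.mp hj' with h | h
        · exact h
        · exact absurd h hj
      exact ⟨(hz1 j hjC i hi).2, (hz1 j hjC i hi).1⟩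
    -- conservation inside C (including removed vertices)
    have hCcons : ∀ i ∈ C, ∑ j, f i j = ∑ j, f j i := by
      intro i hi
      obtain ⟨hiv, hiT1⟩ := Finset.mem_erase.mp hi
      by_cases hiA : i ∈ A
      · exact hfcons i hiA (fun h => hsT1 (h ▸ hiT1)) (fun h => htT1 (h ▸ hiT1))
      · have h1 : ∀ j, f i j = 0 := fun j => hfz i j (Or.inl hiA)
        have h2 : ∀ j, f j i = 0 := fun j => hfz j i (Or.inr hiA)
        simp [h1, h2]
    have hBrow : ∀ i ∈ C, ∑ j ∈ B, f i j = f i v := by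
      intro i hi
      rw [hB, Finset.sum_insert hvT2,
        Finset.sum_eq_zero (fun j hj => (hz1 i hi j hj).1), add_zero]
    have hBcol : ∀ i ∈ C, ∑ j ∈ B, f j i = f v i := by
      intro i hi
      rw [hB, Finset.sum_insert hvT2,
        Finset.sum_eq_zero (fun j hj => (hz1 i hi j hj).2), add_zero]
    -- flow into v from C equals flow out of v into C
    have hCbal : ∑ i ∈ C, f i v = ∑ i ∈ C, f v i := by
      have e1 : ∀ i ∈ C, ∑ j, f i j = ∑ j ∈ C, f i j + f i v := by
        intro i hi
        rw [hsplit (f i ·), hBrow i hi]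
      have e2 : ∀ i ∈ C, ∑ j, f j i = ∑ j ∈ C, f j i + f v i := by
        intro i hi
        rw [hsplit (f · i), hBcol i hi]
      have h1 : ∑ i ∈ C, (∑ j ∈ C, f i j + f i v)
          = ∑ i ∈ C, (∑ j ∈ C, f j i + f v i) := by
        rw [← Finset.sum_congr rfl e1, ← Finset.sum_congr rfl e2]
        exact Finset.sum_congr rfl hCcons
      rw [Finset.sum_add_distrib, Finset.sum_add_distrib, Finset.sum_comm] at h1
      exact add_left_cancel h1
    have hvA : v ∈ A := (hmemA v).mpr hvS
    have hvB : ∑ j ∈ B, f v j = ∑ j ∈ B, f j v := by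
      have hcons := hfcons v hvA (fun h => hsT1 (h ▸ hvT1)) (fun h => htT1 (h ▸ hvT1))
      rw [hsplit (f v ·), hsplit (f · v)] at hcons
      have h2 : ∑ j ∈ C, f j v = ∑ j ∈ C, f v j := hCbal
      linarith
    -- the restricted flow
    refine ⟨fun i j => if i ∈ B ∧ j ∈ B then f i j else 0, ⟨?_, ?_, ?_, ?_⟩, ?_⟩
    · intro i j
      dsimp only
      split
      · exact hf0 i j
      · exact le_refl 0
    · intro i j
      dsimp only
      split
      · exact hfc i j
      · exact hcap i j
    · intro i j hij
      dsimp only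
      split
      · rename_i hmem
        obtain ⟨hiB, hjB⟩ := hmem
        rcases hij with h | h
        · by_cases hik : i = k
          · exact absurd (hik ▸ hiB) hkB
          · exact hfz i j (Or.inl fun h' => h (Finset.mem_erase.mpr ⟨hik, h'⟩))
        · by_cases hjk : j = k
          · exact absurd (hjk ▸ hjB) hkB
          · exact hfz i j (Or.inr fun h' => h (Finset.mem_erase.mpr ⟨hjk, h'⟩))
      · rfl
    · intro i hi his hit
      by_cases hiB : i ∈ B
      · have hrow : (∑ j, if i ∈ B ∧ j ∈ B then f i j else 0) = ∑ j ∈ B, f i j := by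
          simp only [hiB, true_and]
          rw [Finset.sum_ite_mem, Finset.univ_inter]
        have hcol : (∑ j, if j ∈ B ∧ i ∈ B then f j i else 0) = ∑ j ∈ B, f j i := by
          simp only [hiB, and_true]
          rw [Finset.sum_ite_mem, Finset.univ_inter]
        rw [hrow, hcol]
        rcases Finset.mem_insert.mp hiB with h | h
        · exact h ▸ hvB
        · have hiA : i ∈ A := hT2A i h
          have h1 : ∑ j ∈ B, f i j = ∑ j, f i j :=
            Finset.sum_subset (Finset.subset_univ B)
              (fun j _ hj => (hz2 i h j hj).1)
          have h2 : ∑ j ∈ B, f j i = ∑ j, f j i :=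
            Finset.sum_subset (Finset.subset_univ B)
              (fun j _ hj => (hz2 i h j hj).2)
          rw [h1, h2]
          exact hfcons i hiA his hit
      · simp [hiB]
    · rw [← hval]
      have hrow : (∑ j, if s ∈ B ∧ j ∈ B then f s j else 0) = ∑ j, f s j := by
        simp only [hsB, true_and]
        rw [Finset.sum_ite_mem, Finset.univ_inter]
        exact Finset.sum_subset (Finset.subset_univ B)
          (fun j _ hj => (hz2 s hs j hj).1)
      have hcol : (∑ j, if j ∈ B ∧ s ∈ B then f j s else 0) = ∑ j, f j s := by
        simp only [hsB, and_true]
        rw [Finset.sum_ite_mem, Finset.univ_inter]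
        exact Finset.sum_subset (Finset.subset_univ B)
          (fun j _ hj => (hz2 s hs j hj).2)
      rw [hrow, hcol]
  · rintro ⟨f, hf, hval⟩
    obtain ⟨hf0, hfc, hfz, hfcons⟩ := hf
    refine ⟨f, ⟨hf0, hfc, ?_, ?_⟩, hval⟩
    · intro i j hij
      rcases hij with h | h
      · exact hfz i j (Or.inl (fun h' => h (Finset.mem_of_mem_erase h')))
      · exact hfz i j (Or.inr (fun h' => h (Finset.mem_of_mem_erase h')))
    · intro i hiA his hit
      by_cases hik : i = k
      · subst hik
        have h1 : ∀ j, f i j = 0 := fun j => hfz i j (Or.inl (Finset.notMem_erase i A))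
        have h2 : ∀ j, f j i = 0 := fun j => hfz j i (Or.inr (Finset.notMem_erase i A))
        simp [h1, h2]
      · exact hfcons i (Finset.mem_erase.mpr ⟨hik, hiA⟩) his hit
end

section
/- In the 3SAT reduction graph, a satisfying assignment yields a removal subset S (containing t_i if x_i is false, f_i if x_i is true) such that the maximum d1-d2 flow in G\S is 2n+m, the maximum d1-d2 flow in G\(S∪{k}) is n, and hence z_{d1,d2}(G\S) - z_{d1,d2}(G\(S∪{k})) = n + m. -/
open Finset

variable {V : Type*} [Fintype V] [DecidableEq V]

/-- Vertices of the 3SAT reduction graph (leaves attached to `d1`, `d2` are not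
needed for the `d1`-`d2` flow statements). -/
inductive RV (n m : ℕ) where
  | d1 : RV n m
  | d2 : RV n m
  | kk : RV n m
  | a (i : Fin n) : RV n m
  | b (i : Fin n) : RV n m
  | t (i : Fin n) : RV n m
  | f (i : Fin n) : RV n m
  | u (j : Fin m) : RV n m
  | v (j : Fin m) : RV n m
  deriving DecidableEq, Fintype

open Classical in
/-- Capacities of the 3SAT reduction graph for clauses `cl`, where literal
`(i, true)` means `x_i` and `(i, false)` means `¬x_i`. -/
noncomputable def redCap {n m : ℕ} (cl : Fin m → Fin 3 → Fin n × Bool) :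
    RV n m → RV n m → ℝ
  | .kk, .d2 => (n : ℝ) + m
  | .d1, .a _ => 2
  | .a i, .t i' => if i = i' then 2 else 0
  | .a i, .f i' => if i = i' then 2 else 0
  | .t i, .b i' => if i = i' then 1 else 0
  | .f i, .b i' => if i = i' then 1 else 0
  | .t _, .d2 => 1
  | .f _, .d2 => 1
  | .b _, .kk => 1
  | .d1, .u _ => 1
  | .v _, .kk => 1
  | .u j, .t i => if ∃ l, cl j l = (i, true) then 1 else 0
  | .t i, .v j => if ∃ l, cl j l = (i, true) then 1 else 0
  | .u j, .f i => if ∃ l, cl j l = (i, false) then 1 else 0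
  | .f i, .v j => if ∃ l, cl j l = (i, false) then 1 else 0
  | _, _ => 0

/-- The removal subset induced by an assignment: `t_i` if `x_i` is false and
`f_i` if `x_i` is true. -/
def assignSet {n m : ℕ} (σ : Fin n → Bool) : Finset (RV n m) :=
  Finset.univ.filter (fun x => (match x with
    | .t i => !σ i
    | .f i => σ i
    | _ => false) = true)


section AuxFlow
variable {V : Type*} [Fintype V] [DecidableEq V]

lemma isFlow_value_le_capOut {cap : V → V → ℝ} {A : Finset V} {s t : V} {f : V → V → ℝ}
    (hf : IsFlow cap A s t f) : (∑ j, f s j) - (∑ j, f j s) ≤ ∑ j, cap s j := by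
  have h1 : ∑ j, f s j ≤ ∑ j, cap s j := Finset.sum_le_sum fun j _ => hf.2.1 s j
  have h2 : (0:ℝ) ≤ ∑ j, f j s := Finset.sum_nonneg fun j _ => hf.1 j s
  linarith

lemma isFlow_value_le_inflow {cap : V → V → ℝ} {A : Finset V} {s t : V} {f : V → V → ℝ}
    (hf : IsFlow cap A s t f) (hst : s ≠ t) :
    (∑ j, f s j) - (∑ j, f j s) ≤ ∑ j, f j t := by
  classical
  set D : V → ℝ := fun i => (∑ j, f i j) - (∑ j, f j i) with hD
  have hsum : ∑ i, D i = 0 := by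
    simp only [hD, Finset.sum_sub_distrib]
    rw [Finset.sum_comm]
    ring
  have hzero : ∀ i, i ≠ s → i ≠ t → D i = 0 := by
    intro i his hit
    by_cases hi : i ∈ A
    · simp only [hD]
      rw [hf.2.2.2 i hi his hit]
      ring
    · have h1 : ∀ j, f i j = 0 := fun j => hf.2.2.1 i j (Or.inl hi)
      have h2 : ∀ j, f j i = 0 := fun j => hf.2.2.1 j i (Or.inr hi)
      simp [hD, h1, h2]
  have hts : t ∈ Finset.univ.erase s := Finset.mem_erase.2 ⟨hst.symm, Finset.mem_univ t⟩
  have key : D s + (D t + ∑ i ∈ (Finset.univ.erase s).erase t, D i) = 0 := by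
    rw [Finset.add_sum_erase _ _ hts, Finset.add_sum_erase _ _ (Finset.mem_univ s)]
    exact hsum
  have hrest : ∑ i ∈ (Finset.univ.erase s).erase t, D i = 0 := by
    apply Finset.sum_eq_zero
    intro i hi
    have h1 := Finset.mem_erase.1 hi
    have h2 := Finset.mem_erase.1 h1.2
    exact hzero i h2.1 h1.1
  have hft : (0:ℝ) ≤ ∑ j, f t j := Finset.sum_nonneg fun j _ => hf.1 t j
  have hDt : D t = (∑ j, f t j) - (∑ j, f j t) := rfl
  have hDs : D s = (∑ j, f s j) - (∑ j, f j s) := rfl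
  rw [hrest] at key
  linarith [key, hft, hDt ▸ le_refl (D t)]

lemma maxFlow_eq_s17 {cap : V → V → ℝ} {A : Finset V} {s t : V} {C : ℝ} (f₀ : V → V → ℝ)
    (h₀ : IsFlow cap A s t f₀) (hv : (∑ j, f₀ s j) - (∑ j, f₀ j s) = C)
    (hub : ∀ f, IsFlow cap A s t f → (∑ j, f s j) - (∑ j, f j s) ≤ C) :
    maxFlow cap A s t = C := by
  have hmem : C ∈ {r | ∃ f, IsFlow cap A s t f ∧ (∑ j, f s j) - (∑ j, f j s) = r} :=
    ⟨f₀, h₀, hv⟩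
  have hbdd : ∀ r ∈ {r | ∃ f, IsFlow cap A s t f ∧ (∑ j, f s j) - (∑ j, f j s) = r}, r ≤ C := by
    rintro r ⟨f, hf, rfl⟩; exact hub f hf
  exact le_antisymm (csSup_le ⟨C, hmem⟩ hbdd) (le_csSup ⟨C, hbdd⟩ hmem)

end AuxFlow

section RVsum
variable {n m : ℕ}

def rvEquiv (n m : ℕ) :
    RV n m ≃ (Unit ⊕ Unit ⊕ Unit ⊕ Fin n ⊕ Fin n ⊕ Fin n ⊕ Fin n ⊕ Fin m ⊕ Fin m) where
  toFun x := match x with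
    | .d1 => .inl ()
    | .d2 => .inr (.inl ())
    | .kk => .inr (.inr (.inl ()))
    | .a i => .inr (.inr (.inr (.inl i)))
    | .b i => .inr (.inr (.inr (.inr (.inl i))))
    | .t i => .inr (.inr (.inr (.inr (.inr (.inl i)))))
    | .f i => .inr (.inr (.inr (.inr (.inr (.inr (.inl i))))))
    | .u j => .inr (.inr (.inr (.inr (.inr (.inr (.inr (.inl j)))))))
    | .v j => .inr (.inr (.inr (.inr (.inr (.inr (.inr (.inr j)))))))
  invFun y := match y with
    | .inl _ => .d1
    | .inr (.inl _) => .d2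
    | .inr (.inr (.inl _)) => .kk
    | .inr (.inr (.inr (.inl i))) => .a i
    | .inr (.inr (.inr (.inr (.inl i)))) => .b i
    | .inr (.inr (.inr (.inr (.inr (.inl i))))) => .t i
    | .inr (.inr (.inr (.inr (.inr (.inr (.inl i)))))) => .f i
    | .inr (.inr (.inr (.inr (.inr (.inr (.inr (.inl j))))))) => .u j
    | .inr (.inr (.inr (.inr (.inr (.inr (.inr (.inr j))))))) => .v j
  left_inv x := by cases x <;> rfl
  right_inv y := by
    rcases y with _ | (_ | (_ | (_ | (_ | (_ | (_ | (_ | _)))))))  <;> rfl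

lemma sumRV {M : Type*} [AddCommMonoid M] (g : RV n m → M) :
    ∑ x, g x = g .d1 + g .d2 + g .kk + (∑ i, g (.a i)) + (∑ i, g (.b i)) +
      (∑ i, g (.t i)) + (∑ i, g (.f i)) + (∑ j, g (.u j)) + (∑ j, g (.v j)) := by
  rw [← Equiv.sum_comp (rvEquiv n m).symm g]
  simp [Fintype.sum_sum_type, rvEquiv, add_assoc]

end RVsum


section Red
variable {n m : ℕ}

/-- Flow of value `2n+m` in `G \ S`. -/
noncomputable def F1 (σ : Fin n → Bool) (p : Fin m → Fin n × Bool) : RV n m → RV n m → ℝ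
  | .d1, .a _ => 2
  | .d1, .u _ => 1
  | .a i, .t i' => if σ i then (if i = i' then 2 else 0) else 0
  | .a i, .f i' => if σ i then 0 else (if i = i' then 2 else 0)
  | .t i, .b i' => if σ i then (if i = i' then 1 else 0) else 0
  | .f i, .b i' => if σ i then 0 else (if i = i' then 1 else 0)
  | .t i, .d2 => if σ i then 1 else 0
  | .f i, .d2 => if σ i then 0 else 1
  | .b _, .kk => 1
  | .u j, .t i => if (p j).2 then (if (p j).1 = i then 1 else 0) else 0
  | .u j, .f i => if (p j).2 then 0 else (if (p j).1 = i then 1 else 0)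
  | .t i, .v j => if (p j).2 then (if (p j).1 = i then 1 else 0) else 0
  | .f i, .v j => if (p j).2 then 0 else (if (p j).1 = i then 1 else 0)
  | .v _, .kk => 1
  | .kk, .d2 => (n : ℝ) + m
  | _, _ => 0

/-- Flow of value `n` in `G \ (S ∪ {k})`. -/
noncomputable def F2 (σ : Fin n → Bool) : RV n m → RV n m → ℝ
  | .d1, .a _ => 1
  | .a i, .t i' => if σ i then (if i = i' then 1 else 0) else 0
  | .a i, .f i' => if σ i then 0 else (if i = i' then 1 else 0)
  | .t i, .d2 => if σ i then 1 else 0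
  | .f i, .d2 => if σ i then 0 else 1
  | _, _ => 0

variable (σ : Fin n → Bool)

lemma F1_nonneg (p : Fin m → Fin n × Bool) (x y : RV n m) : 0 ≤ F1 σ p x y := by
  cases x <;> cases y <;> simp only [F1] <;>
    positivity

lemma F2_nonneg (x y : RV n m) : 0 ≤ F2 σ x y := by
  cases x <;> cases y <;> simp only [F2] <;>
    positivity

lemma F1_le_cap (cl : Fin m → Fin 3 → Fin n × Bool) (p : Fin m → Fin n × Bool)
    (hp : ∀ j, ∃ l, cl j l = p j) (x y : RV n m) :
    F1 σ p x y ≤ redCap cl x y := by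
  have hcore : ∀ (j : Fin m) (i : Fin n) (bv : Bool),
      (if (p j).2 = bv then (if (p j).1 = i then (1:ℝ) else 0) else 0) ≤
        (if ∃ l, cl j l = (i, bv) then 1 else 0) := by
    intro j i bv
    by_cases h2 : (p j).2 = bv
    · rw [if_pos h2]
      by_cases h1 : (p j).1 = i
      · rw [if_pos h1, if_pos]
        obtain ⟨l, hl⟩ := hp j
        exact ⟨l, by rw [hl, Prod.ext_iff]; exact ⟨h1, h2⟩⟩
      · rw [if_neg h1]; split <;> norm_num
    · rw [if_neg h2]; split <;> norm_num
  have hT : ∀ (j : Fin m) (i : Fin n),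
      (if (p j).2 then (if (p j).1 = i then (1:ℝ) else 0) else 0) ≤
        (if ∃ l, cl j l = (i, true) then 1 else 0) := fun j i => hcore j i true
  have hF : ∀ (j : Fin m) (i : Fin n),
      (if (p j).2 then (0:ℝ) else (if (p j).1 = i then 1 else 0)) ≤
        (if ∃ l, cl j l = (i, false) then 1 else 0) := by
    intro j i
    refine le_trans (le_of_eq ?_) (hcore j i false)
    by_cases h2 : (p j).2 <;> simp [h2]
  cases x <;> cases y <;> simp only [F1, redCap] <;>
    first
      | exact hT _ _
      | exact hF _ _
      | ((repeat' split) <;> (first | positivity | (norm_num; done) | exact le_rfl))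

lemma F2_le_cap (cl : Fin m → Fin 3 → Fin n × Bool) (x y : RV n m) :
    F2 σ x y ≤ redCap cl x y := by
  cases x <;> cases y <;> simp only [F2, redCap] <;>
    ((repeat' split) <;> (first | positivity | (norm_num; done) | exact le_rfl))

lemma notmem_A1 (x : RV n m) : (x ∉ Finset.univ \ assignSet σ) ↔
    ((∃ i, x = RV.t i ∧ σ i = false) ∨ (∃ i, x = RV.f i ∧ σ i = true)) := by
  cases x <;> simp [assignSet]

lemma F1_supp (p : Fin m → Fin n × Bool) (hpσ : ∀ j, σ (p j).1 = (p j).2) (x y : RV n m)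
    (h : x ∉ Finset.univ \ assignSet σ ∨ y ∉ Finset.univ \ assignSet σ) :
    F1 σ p x y = 0 := by
  have hzT : ∀ (j : Fin m) (i : Fin n), σ i = false →
      (if (p j).2 then (if (p j).1 = i then (1:ℝ) else 0) else 0) = 0 := by
    intro j i hi
    by_cases h2 : (p j).2 = true
    · rw [if_pos h2, if_neg]
      intro h1
      have hh := hpσ j
      rw [h1, h2, hi] at hh
      exact Bool.false_ne_true hh
    · rw [if_neg h2]
  have hzF : ∀ (j : Fin m) (i : Fin n), σ i = true →
      (if (p j).2 then (0:ℝ) else (if (p j).1 = i then 1 else 0)) = 0 := by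
    intro j i hi
    by_cases h2 : (p j).2 = true
    · rw [if_pos h2]
    · rw [if_neg h2, if_neg]
      intro h1
      have hh := hpσ j
      rw [h1, hi] at hh
      exact h2 hh.symm
  have hzA : ∀ (v : ℝ) (i'' i : Fin n), σ i = false →
      (if σ i'' then (if i'' = i then v else 0) else 0) = 0 := by
    intro v i'' i hi
    by_cases h2 : σ i'' = true
    · rw [if_pos h2, if_neg]
      intro h1; rw [h1, hi] at h2; exact Bool.false_ne_true h2
    · rw [if_neg h2]
  have hzA' : ∀ (v : ℝ) (i'' i : Fin n), σ i = true →
      (if σ i'' then 0 else (if i'' = i then v else 0)) = 0 := by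
    intro v i'' i hi
    by_cases h2 : σ i'' = true
    · rw [if_pos h2]
    · rw [if_neg h2, if_neg]
      intro h1; rw [h1, hi] at h2; exact h2 rfl
  rcases h with h | h
  · rcases (notmem_A1 σ x).1 h with ⟨i, rfl, hi⟩ | ⟨i, rfl, hi⟩ <;>
      cases y <;> simp only [F1] <;>
      first
        | rfl
        | exact hzT _ _ hi
        | exact hzF _ _ hi
        | simp [hi]
  · rcases (notmem_A1 σ y).1 h with ⟨i, rfl, hi⟩ | ⟨i, rfl, hi⟩ <;>
      cases x <;> simp only [F1] <;>
      first
        | rfl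
        | exact hzT _ _ hi
        | exact hzF _ _ hi
        | exact hzA _ _ _ hi
        | exact hzA' _ _ _ hi
        | simp [hi]

lemma F2_supp (x y : RV n m)
    (h : x ∉ (Finset.univ \ assignSet σ).erase RV.kk ∨
         y ∉ (Finset.univ \ assignSet σ).erase RV.kk) :
    F2 σ x y = 0 := by
  have hzA : ∀ (v : ℝ) (i'' i : Fin n), σ i = false →
      (if σ i'' then (if i'' = i then v else 0) else 0) = 0 := by
    intro v i'' i hi
    by_cases h2 : σ i'' = true
    · rw [if_pos h2, if_neg]
      intro h1; rw [h1, hi] at h2; exact Bool.false_ne_true h2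
    · rw [if_neg h2]
  have hzA' : ∀ (v : ℝ) (i'' i : Fin n), σ i = true →
      (if σ i'' then 0 else (if i'' = i then v else 0)) = 0 := by
    intro v i'' i hi
    by_cases h2 : σ i'' = true
    · rw [if_pos h2]
    · rw [if_neg h2, if_neg]
      intro h1; rw [h1, hi] at h2; exact h2 rfl
  have hsplit : ∀ z : RV n m, z ∉ (Finset.univ \ assignSet σ).erase RV.kk →
      z = RV.kk ∨ z ∉ Finset.univ \ assignSet σ := by
    intro z hz
    by_cases hk : z = RV.kk
    · exact Or.inl hk
    · exact Or.inr fun hmem => hz (Finset.mem_erase.2 ⟨hk, hmem⟩)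
  rcases h with h | h
  · rcases hsplit x h with rfl | h'
    · cases y <;> rfl
    · rcases (notmem_A1 σ x).1 h' with ⟨i, rfl, hi⟩ | ⟨i, rfl, hi⟩ <;>
        cases y <;> simp only [F2] <;> first | rfl | simp [hi]
  · rcases hsplit y h with rfl | h'
    · cases x <;> rfl
    · rcases (notmem_A1 σ y).1 h' with ⟨i, rfl, hi⟩ | ⟨i, rfl, hi⟩ <;>
        cases x <;> simp only [F2] <;>
        first
          | rfl
          | exact hzA _ _ _ hi
          | exact hzA' _ _ _ hi
          | simp [hi]

lemma sum_nestedR (c : Fin n → Bool) (i : Fin n) (v : ℝ) :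
    ∑ i', (if c i' then (if i' = i then v else 0) else 0) = if c i then v else 0 := by
  have h : ∀ i', (if c i' then (if i' = i then v else 0) else 0) =
      (if i' = i then (if c i' then v else 0) else 0) := by
    intro i'
    by_cases h1 : c i' <;> by_cases h2 : i' = i <;> simp [h1, h2]
  rw [Finset.sum_congr rfl fun i' _ => h i']
  rw [Finset.sum_ite_eq' Finset.univ i (fun i' => if c i' then v else 0)]
  simp

lemma sum_nestedR' (c : Fin n → Bool) (i : Fin n) (v : ℝ) :
    ∑ i', (if c i' then 0 else (if i' = i then v else 0)) = if c i then 0 else v := by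
  have h : ∀ i', (if c i' then 0 else (if i' = i then v else 0)) =
      (if i' = i then (if c i' then 0 else v) else 0) := by
    intro i'
    by_cases h1 : c i' <;> by_cases h2 : i' = i <;> simp [h1, h2]
  rw [Finset.sum_congr rfl fun i' _ => h i']
  rw [Finset.sum_ite_eq' Finset.univ i (fun i' => if c i' then 0 else v)]
  simp

lemma F1_cons (p : Fin m → Fin n × Bool) (x : RV n m)
    (hxs : x ≠ RV.d1) (hxt : x ≠ RV.d2) :
    (∑ y, F1 σ p x y) = ∑ y, F1 σ p y x := by
  cases x with
  | d1 => exact absurd rfl hxs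
  | d2 => exact absurd rfl hxt
  | kk =>
    rw [sumRV, sumRV]
    simp [F1]
  | a i =>
    rw [sumRV, sumRV]
    by_cases hσi : σ i <;> simp [F1, hσi]
  | b i =>
    rw [sumRV, sumRV]
    by_cases hσi : σ i <;> simp [F1, sum_nestedR, sum_nestedR', hσi]
  | t i =>
    rw [sumRV, sumRV]
    by_cases hσi : σ i <;> simp [F1, sum_nestedR, hσi] <;> ring
  | f i =>
    rw [sumRV, sumRV]
    by_cases hσi : σ i <;> simp [F1, sum_nestedR', hσi] <;> ring
  | u j =>
    rw [sumRV, sumRV]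
    by_cases h2 : (p j).2 <;> simp [F1, h2]
  | v j =>
    rw [sumRV, sumRV]
    by_cases h2 : (p j).2 <;> simp [F1, h2]

lemma F2_cons (x : RV n m) (hxs : x ≠ RV.d1) (hxt : x ≠ RV.d2) :
    (∑ y, F2 σ x y) = ∑ y, F2 σ y x := by
  cases x with
  | d1 => exact absurd rfl hxs
  | d2 => exact absurd rfl hxt
  | kk => rw [sumRV, sumRV]; simp [F2]
  | a i =>
    rw [sumRV, sumRV]
    by_cases hσi : σ i <;> simp [F2, hσi]
  | b i => rw [sumRV, sumRV]; simp [F2]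
  | t i =>
    rw [sumRV, sumRV]
    by_cases hσi : σ i <;> simp [F2, sum_nestedR, hσi]
  | f i =>
    rw [sumRV, sumRV]
    by_cases hσi : σ i <;> simp [F2, sum_nestedR', hσi]
  | u j => rw [sumRV, sumRV]; simp [F2]
  | v j => rw [sumRV, sumRV]; simp [F2]

lemma F1_value (p : Fin m → Fin n × Bool) :
    (∑ y, F1 σ p RV.d1 y) - (∑ y, F1 σ p y RV.d1) = 2 * (n:ℝ) + m := by
  rw [sumRV, sumRV]
  simp [F1]
  ring

lemma F2_value :
    (∑ y, F2 σ (RV.d1 : RV n m) y) - (∑ y, F2 σ y (RV.d1 : RV n m)) = (n:ℝ) := by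
  rw [sumRV, sumRV]
  simp [F2]

lemma capSum_d1 (cl : Fin m → Fin 3 → Fin n × Bool) :
    ∑ y, redCap cl (.d1 : RV n m) y = 2*(n:ℝ) + m := by
  rw [sumRV]; simp [redCap]; ring

lemma flow2_ub (cl : Fin m → Fin 3 → Fin n × Bool) (f : RV n m → RV n m → ℝ)
    (hf : IsFlow (redCap cl) ((Finset.univ \ assignSet σ).erase RV.kk) RV.d1 RV.d2 f) :
    (∑ y, f RV.d1 y) - (∑ y, f y RV.d1) ≤ (n:ℝ) := by
  have hd12 : (RV.d1 : RV n m) ≠ RV.d2 := fun h => by cases h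
  refine le_trans (isFlow_value_le_inflow hf hd12) ?_
  set B : RV n m → ℝ := fun x => (match x with
    | RV.t i => if σ i then (1:ℝ) else 0
    | RV.f i => if σ i then 0 else 1
    | _ => 0) with hB
  have hb : ∀ x : RV n m, f x RV.d2 ≤ B x := by
    intro x
    have hcap := hf.2.1 x RV.d2
    cases x with
    | kk =>
      have : f RV.kk RV.d2 = 0 :=
        hf.2.2.1 _ _ (Or.inl (Finset.notMem_erase _ _))
      simp [hB, this]
    | t i =>
      by_cases hσi : σ i
      · simp only [hB, hσi, if_true]
        exact le_trans hcap (by norm_num [redCap])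
      · have hni : (RV.t i : RV n m) ∉ (Finset.univ \ assignSet σ).erase RV.kk := by
          intro hmem
          exact (notmem_A1 σ (RV.t i)).2
            (Or.inl ⟨i, rfl, Bool.not_eq_true _ ▸ hσi⟩) (Finset.mem_of_mem_erase hmem)
        have : f (RV.t i) RV.d2 = 0 := hf.2.2.1 _ _ (Or.inl hni)
        simp [hB, this, hσi]
    | f i =>
      by_cases hσi : σ i
      · have hni : (RV.f i : RV n m) ∉ (Finset.univ \ assignSet σ).erase RV.kk := by
          intro hmem
          exact (notmem_A1 σ (RV.f i)).2
            (Or.inr ⟨i, rfl, hσi⟩) (Finset.mem_of_mem_erase hmem)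
        have : f (RV.f i) RV.d2 = 0 := hf.2.2.1 _ _ (Or.inl hni)
        simp [hB, this, hσi]
      · simp only [hB, hσi, if_false]
        exact le_trans hcap (by norm_num [redCap])
    | d1 => exact le_trans hcap (by norm_num [redCap, hB])
    | d2 => exact le_trans hcap (by norm_num [redCap, hB])
    | a i => exact le_trans hcap (by norm_num [redCap, hB])
    | b i => exact le_trans hcap (by norm_num [redCap, hB])
    | u j => exact le_trans hcap (by norm_num [redCap, hB])
    | v j => exact le_trans hcap (by norm_num [redCap, hB])
  refine le_trans (Finset.sum_le_sum fun x _ => hb x) ?_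
  rw [sumRV B]
  have hsum : ∀ i : Fin n, B (RV.t i) + B (RV.f i) = 1 := by
    intro i
    by_cases hσi : σ i <;> simp [hB, hσi]
  have : (∑ i, B (RV.t i)) + (∑ i, B (RV.f i)) = (n:ℝ) := by
    rw [← Finset.sum_add_distrib]
    rw [Finset.sum_congr rfl fun i _ => hsum i]
    simp
  simp only [hB]
  simp only [hB] at this
  simp only [Finset.sum_const_zero, add_zero, zero_add]
  linarith [this]

end Red

/-- A satisfying assignment yields a removal subset `S` with max `d1`-`d2` flow
`2n + m` in `G \ S`, max `d1`-`d2` flow `n` in `G \ (S ∪ {k})`, and hence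
per-pair vitality `n + m`. -/
theorem reduction_sat_gives_flow {n m : ℕ} (cl : Fin m → Fin 3 → Fin n × Bool)
    (σ : Fin n → Bool) (hσ : ∀ j, ∃ l, σ (cl j l).1 = (cl j l).2) :
    maxFlow (redCap cl) (Finset.univ \ assignSet σ) RV.d1 RV.d2 =
        2 * (n : ℝ) + m ∧
      maxFlow (redCap cl) ((Finset.univ \ assignSet σ).erase RV.kk) RV.d1 RV.d2 =
        (n : ℝ) ∧
      maxFlow (redCap cl) (Finset.univ \ assignSet σ) RV.d1 RV.d2 -
          maxFlow (redCap cl) ((Finset.univ \ assignSet σ).erase RV.kk) RV.d1 RV.d2 =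
        (n : ℝ) + m := by
  classical
  set p : Fin m → Fin n × Bool := fun j => cl j (Classical.choose (hσ j)) with hp_def
  have hp : ∀ j, ∃ l, cl j l = p j := fun j => ⟨Classical.choose (hσ j), rfl⟩
  have hpσ : ∀ j, σ (p j).1 = (p j).2 := fun j => Classical.choose_spec (hσ j)
  have h1 : maxFlow (redCap cl) (Finset.univ \ assignSet σ) RV.d1 RV.d2 =
      2 * (n : ℝ) + m := by
    apply maxFlow_eq_s17 (F1 σ p)
    · exact ⟨F1_nonneg σ p, F1_le_cap σ cl p hp, F1_supp σ p hpσ,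
        fun x _ hs ht => F1_cons σ p x hs ht⟩
    · exact F1_value σ p
    · intro f hf
      exact le_trans (isFlow_value_le_capOut hf) (le_of_eq (capSum_d1 cl))
  have h2 : maxFlow (redCap cl) ((Finset.univ \ assignSet σ).erase RV.kk) RV.d1 RV.d2 =
      (n : ℝ) := by
    apply maxFlow_eq_s17 (F2 σ)
    · exact ⟨F2_nonneg σ, F2_le_cap σ cl, F2_supp σ,
        fun x _ hs ht => F2_cons σ x hs ht⟩
    · exact F2_value σ
    · exact flow2_ub σ cl
  exact ⟨h1, h2, by rw [h1, h2]; ring⟩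
end

section
/- In the 3SAT reduction graph, for any removal subset S avoiding k, d1, d2, if z_{d1,d2}(G\S) - z_{d1,d2}(G\(S∪{k})) ≥ n + m, then for every variable index i exactly one of t_i, f_i lies in S, and the induced truth assignment (x_i false iff t_i ∈ S) satisfies every clause of the 3SAT instance. -/
open Finset

variable {V : Type*} [Fintype V] [DecidableEq V]

namespace RVProof

variable {n m : ℕ}

def rvEquiv : RV n m ≃ (Unit ⊕ Unit ⊕ Unit ⊕ Fin n ⊕ Fin n ⊕ Fin n ⊕ Fin n ⊕ Fin m ⊕ Fin m) where
  toFun x := match x with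
    | .d1 => Sum.inl ()
    | .d2 => Sum.inr (Sum.inl ())
    | .kk => Sum.inr (Sum.inr (Sum.inl ()))
    | .a i => Sum.inr (Sum.inr (Sum.inr (Sum.inl i)))
    | .b i => Sum.inr (Sum.inr (Sum.inr (Sum.inr (Sum.inl i))))
    | .t i => Sum.inr (Sum.inr (Sum.inr (Sum.inr (Sum.inr (Sum.inl i)))))
    | .f i => Sum.inr (Sum.inr (Sum.inr (Sum.inr (Sum.inr (Sum.inr (Sum.inl i))))))
    | .u j => Sum.inr (Sum.inr (Sum.inr (Sum.inr (Sum.inr (Sum.inr (Sum.inr (Sum.inl j)))))))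
    | .v j => Sum.inr (Sum.inr (Sum.inr (Sum.inr (Sum.inr (Sum.inr (Sum.inr (Sum.inr j)))))))
  invFun y := match y with
    | Sum.inl () => .d1
    | Sum.inr (Sum.inl ()) => .d2
    | Sum.inr (Sum.inr (Sum.inl ())) => .kk
    | Sum.inr (Sum.inr (Sum.inr (Sum.inl i))) => .a i
    | Sum.inr (Sum.inr (Sum.inr (Sum.inr (Sum.inl i)))) => .b i
    | Sum.inr (Sum.inr (Sum.inr (Sum.inr (Sum.inr (Sum.inl i))))) => .t i
    | Sum.inr (Sum.inr (Sum.inr (Sum.inr (Sum.inr (Sum.inr (Sum.inl i)))))) => .f i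
    | Sum.inr (Sum.inr (Sum.inr (Sum.inr (Sum.inr (Sum.inr (Sum.inr (Sum.inl j))))))) => .u j
    | Sum.inr (Sum.inr (Sum.inr (Sum.inr (Sum.inr (Sum.inr (Sum.inr (Sum.inr j))))))) => .v j
  left_inv x := by cases x <;> rfl
  right_inv y := by rcases y with ⟨⟩|⟨⟩|⟨⟩|i|i|i|i|j|j <;> rfl

lemma sum_RV (g : RV n m → ℝ) :
    ∑ x, g x = g .d1 + g .d2 + g .kk + (∑ i, g (.a i)) + (∑ i, g (.b i)) +
      (∑ i, g (.t i)) + (∑ i, g (.f i)) + (∑ j, g (.u j)) + (∑ j, g (.v j)) := by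
  rw [← Equiv.sum_comp (rvEquiv (n := n) (m := m)).symm g]
  simp [Fintype.sum_sum_type, rvEquiv]
  ring

lemma cap_nonneg (cl : Fin m → Fin 3 → Fin n × Bool) (x y : RV n m) :
    0 ≤ redCap cl x y := by
  cases x <;> cases y <;> simp only [redCap] <;> try positivity

lemma cap_to_d1 (cl : Fin m → Fin 3 → Fin n × Bool) (x : RV n m) :
    redCap cl x .d1 = 0 := by cases x <;> rfl

lemma zero_isFlow (cl : Fin m → Fin 3 → Fin n × Bool) (A : Finset (RV n m)) (s t : RV n m) :
    IsFlow (redCap cl) A s t (fun _ _ => 0) :=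
  ⟨fun _ _ => le_refl 0, fun i j => cap_nonneg cl i j, fun _ _ _ => rfl, fun _ _ _ _ => rfl⟩

lemma flow_val_le {cap : RV n m → RV n m → ℝ} {A : Finset (RV n m)} {s t : RV n m}
    {f : RV n m → RV n m → ℝ} (hf : IsFlow cap A s t f) :
    (∑ j, f s j) - (∑ j, f j s) ≤ ∑ j, cap s j := by
  have h1 : (∑ j, f s j) ≤ ∑ j, cap s j := Finset.sum_le_sum fun j _ => hf.2.1 s j
  have h2 : (0:ℝ) ≤ ∑ j, f j s := Finset.sum_nonneg fun j _ => hf.1 j s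
  linarith

lemma maxFlow_bddAbove (cl : Fin m → Fin 3 → Fin n × Bool) (A : Finset (RV n m)) (s t : RV n m) :
    BddAbove {r | ∃ f, IsFlow (redCap cl) A s t f ∧ (∑ j, f s j) - (∑ j, f j s) = r} := by
  refine ⟨∑ j, redCap cl s j, fun r hr => ?_⟩
  obtain ⟨f, hf, hv⟩ := hr
  exact hv ▸ flow_val_le hf

variable (S : Finset (RV n m))

def ind (x : RV n m) : ℝ := if x ∈ S then 0 else 1

lemma ind_nonneg (x : RV n m) : 0 ≤ ind S x := by unfold ind; split <;> norm_num
lemma ind_le_one (x : RV n m) : ind S x ≤ 1 := by unfold ind; split <;> norm_num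
lemma ind_of_mem {x : RV n m} (hx : x ∈ S) : ind S x = 0 := if_pos hx

lemma ind_mul_le (x y : RV n m) : ind S x * ind S y ≤ 1 :=
  mul_le_one₀ (ind_le_one S x) (ind_nonneg S y) (ind_le_one S y)

lemma ind_mul_add_le (x y z : RV n m) : ind S x * (ind S y + ind S z) ≤ 2 := by
  nlinarith [ind_nonneg S x, ind_le_one S x, ind_nonneg S y, ind_le_one S y,
    ind_nonneg S z, ind_le_one S z]

def lowFlow : RV n m → RV n m → ℝ := fun x y =>
  match x, y with
  | .d1, .a i => ind S (.a i) * (ind S (.t i) + ind S (.f i))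
  | .a i, .t i' => if i = i' then ind S (.a i) * ind S (.t i) else 0
  | .a i, .f i' => if i = i' then ind S (.a i) * ind S (.f i) else 0
  | .t i, .d2 => ind S (.a i) * ind S (.t i)
  | .f i, .d2 => ind S (.a i) * ind S (.f i)
  | _, _ => 0

lemma lowFlow_isFlow (cl : Fin m → Fin 3 → Fin n × Bool)
    (hd1S : RV.d1 ∉ S) (hd2S : RV.d2 ∉ S) :
    IsFlow (redCap cl) ((Finset.univ \ S).erase RV.kk) RV.d1 RV.d2 (lowFlow S) := by
  have h0 := ind_nonneg S
  have h1 := ind_le_one S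
  refine ⟨?_, ?_, ?_, ?_⟩
  · intro x y
    cases x <;> cases y <;> simp only [lowFlow] <;>
      first
        | exact mul_nonneg (h0 _) (add_nonneg (h0 _) (h0 _))
        | exact mul_nonneg (h0 _) (h0 _)
        | (split_ifs <;> first | exact mul_nonneg (h0 _) (h0 _) | norm_num)
        | norm_num
  · intro x y
    cases x <;> cases y <;> simp only [lowFlow, redCap] <;>
      first
        | exact cap_nonneg cl _ _
        | exact ind_mul_add_le S _ _ _
        | exact (ind_mul_le S _ _).trans (by norm_num)
        | (split_ifs <;>
            first
              | exact (ind_mul_le S _ _).trans (by norm_num)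
              | exact cap_nonneg cl _ _
              | norm_num)
        | positivity
        | norm_num
  · intro x y hxy
    have hA : ∀ z : RV n m, z ∉ (Finset.univ \ S).erase RV.kk → z ≠ RV.kk → ind S z = 0 := by
      intro z hz hzk
      apply ind_of_mem
      by_contra hzS
      exact hz (Finset.mem_erase.2 ⟨hzk, Finset.mem_sdiff.2 ⟨Finset.mem_univ _, hzS⟩⟩)
    have hd1A : RV.d1 ∈ (Finset.univ \ S).erase RV.kk := by
      simp [Finset.mem_erase, hd1S]
    have hd2A : RV.d2 ∈ (Finset.univ \ S).erase RV.kk := by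
      simp [Finset.mem_erase, hd2S]
    cases x <;> cases y <;> simp only [lowFlow] <;> try rfl
    all_goals rcases hxy with hx | hy
    · exact absurd hd1A hx
    · rw [hA _ hy (by simp)]; ring
    · rw [hA _ hx (by simp)]; split_ifs <;> ring
    · split_ifs with h
      · subst h; rw [hA _ hy (by simp)]; ring
      · rfl
    · rw [hA _ hx (by simp)]; split_ifs <;> ring
    · split_ifs with h
      · subst h; rw [hA _ hy (by simp)]; ring
      · rfl
    · rw [hA _ hx (by simp)]; ring
    · exact absurd hd2A hy
    · rw [hA _ hx (by simp)]; ring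
    · exact absurd hd2A hy
  · intro x hx hxs hxt
    cases x with
    | d1 => exact absurd rfl hxs
    | d2 => exact absurd rfl hxt
    | kk => exfalso; revert hx; simp
    | a i =>
        rw [sum_RV, sum_RV]
        simp only [lowFlow, Finset.sum_const_zero, Finset.sum_ite_eq, Finset.mem_univ,
          if_true]
        ring
    | b i =>
        rw [sum_RV, sum_RV]
        simp only [lowFlow, Finset.sum_const_zero]
    | t i =>
        rw [sum_RV, sum_RV]
        simp only [lowFlow, Finset.sum_const_zero, Finset.sum_ite_eq', Finset.mem_univ,
          if_true]
        ring
    | f i =>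
        rw [sum_RV, sum_RV]
        simp only [lowFlow, Finset.sum_const_zero, Finset.sum_ite_eq', Finset.mem_univ,
          if_true]
        ring
    | u j =>
        rw [sum_RV, sum_RV]
        simp only [lowFlow, Finset.sum_const_zero]
    | v j =>
        rw [sum_RV, sum_RV]
        simp only [lowFlow, Finset.sum_const_zero]

lemma lowFlow_value :
    (∑ y, lowFlow S RV.d1 y) - (∑ y, lowFlow S y RV.d1) =
      ∑ i, ind S (RV.a i) * (ind S (RV.t i) + ind S (RV.f i)) := by
  rw [sum_RV, sum_RV]
  simp [lowFlow]

open Classical in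
noncomputable def chi (i : Fin n) : ℝ :=
  if Xor' (RV.t i ∈ S) (RV.f i ∈ S) then 1 else 0

open Classical in
noncomputable def psi (cl : Fin m → Fin 3 → Fin n × Bool) (j : Fin m) : ℝ :=
  if ∃ l : Fin 3, (if (cl j l).2 then (RV.t (cl j l).1 : RV n m) ∉ S
      else (RV.f (cl j l).1 : RV n m) ∉ S) then 1 else 0

lemma chi_nonneg (i : Fin n) : 0 ≤ chi S i := by unfold chi; split <;> norm_num
lemma chi_le_one (i : Fin n) : chi S i ≤ 1 := by unfold chi; split <;> norm_num
lemma psi_nonneg (cl : Fin m → Fin 3 → Fin n × Bool) (j : Fin m) : 0 ≤ psi S cl j := by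
  unfold psi; split <;> norm_num
lemma psi_le_one (cl : Fin m → Fin 3 → Fin n × Bool) (j : Fin m) : psi S cl j ≤ 1 := by
  unfold psi; split <;> norm_num

lemma flow_value_upper (cl : Fin m → Fin 3 → Fin n × Bool)
    {f : RV n m → RV n m → ℝ}
    (hf : IsFlow (redCap cl) (Finset.univ \ S) RV.d1 RV.d2 f) :
    (∑ y, f RV.d1 y) - (∑ y, f y RV.d1) ≤
      (∑ i, ind S (RV.a i) * (ind S (RV.t i) + ind S (RV.f i))) +
        (∑ i, chi S i) + (∑ j, psi S cl j) := by
  obtain ⟨hnn, hcap, hzero, hcons⟩ := hf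
  -- vanishing helpers
  have hfz : ∀ x y : RV n m, redCap cl x y = 0 → f x y = 0 := fun x y h =>
    le_antisymm ((hcap x y).trans h.le) (hnn x y)
  have hmemz : ∀ x y : RV n m, y ∈ S → f x y = 0 := by
    intro x y hy
    exact hzero x y (Or.inr (by simp [Finset.mem_sdiff, hy]))
  have hmemz' : ∀ x y : RV n m, x ∈ S → f x y = 0 := by
    intro x y hx
    exact hzero x y (Or.inl (by simp [Finset.mem_sdiff, hx]))
  -- inflow to d1 is 0
  have hin : (∑ y, f y RV.d1) = 0 :=
    Finset.sum_eq_zero fun y _ => hfz y RV.d1 (cap_to_d1 cl y)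
  -- per-variable bound
  have hA : ∀ i : Fin n, f RV.d1 (RV.a i) ≤
      ind S (RV.a i) * (ind S (RV.t i) + ind S (RV.f i)) + chi S i := by
    intro i
    by_cases ha : RV.a i ∈ S
    · rw [hmemz _ _ ha, ind_of_mem S ha]
      have := chi_nonneg S i
      linarith
    by_cases ht : RV.t i ∈ S <;> by_cases htf : RV.f i ∈ S
    · -- both removed: flow into a i must be 0
      have hmemA : RV.a i ∈ Finset.univ \ S := by simp [Finset.mem_sdiff, ha]
      have hc := hcons (RV.a i) hmemA (by simp) (by simp)
      have hout : (∑ y, f (RV.a i) y) = 0 := by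
        apply Finset.sum_eq_zero
        intro y _
        cases y with
        | t i' =>
            by_cases hii : i = i'
            · subst hii; exact hmemz _ _ ht
            · exact hfz _ _ (by simp [redCap, hii])
        | f i' =>
            by_cases hii : i = i'
            · subst hii; exact hmemz _ _ htf
            · exact hfz _ _ (by simp [redCap, hii])
        | d1 => exact hfz _ _ rfl
        | d2 => exact hfz _ _ rfl
        | kk => exact hfz _ _ rfl
        | a i' => exact hfz _ _ rfl
        | b i' => exact hfz _ _ rfl
        | u j' => exact hfz _ _ rfl
        | v j' => exact hfz _ _ rfl
      have hle : f RV.d1 (RV.a i) ≤ ∑ y, f y (RV.a i) :=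
        Finset.single_le_sum (fun y _ => hnn y (RV.a i)) (Finset.mem_univ _)
      rw [← hc, hout] at hle
      have h1 := ind_of_mem S ht
      have h2 := ind_of_mem S htf
      have h3 := chi_nonneg S i
      rw [h1, h2]
      linarith
    all_goals have hcap2 : f RV.d1 (RV.a i) ≤ 2 := (hcap _ _).trans_eq (by simp [redCap])
    · -- t ∈ S, f ∉ S : Xor holds
      have hx : chi S i = 1 := by unfold chi; rw [if_pos]; exact Or.inl ⟨ht, htf⟩
      have h1 : ind S (RV.a i) = 1 := if_neg ha
      have h2 : ind S (RV.t i) = 0 := ind_of_mem S ht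
      have h3 : ind S (RV.f i) = 1 := if_neg htf
      rw [hx, h1, h2, h3]; linarith
    · have hx : chi S i = 1 := by unfold chi; rw [if_pos]; exact Or.inr ⟨htf, ht⟩
      have h1 : ind S (RV.a i) = 1 := if_neg ha
      have h2 : ind S (RV.t i) = 1 := if_neg ht
      have h3 : ind S (RV.f i) = 0 := ind_of_mem S htf
      rw [hx, h1, h2, h3]; linarith
    · have h1 : ind S (RV.a i) = 1 := if_neg ha
      have h2 : ind S (RV.t i) = 1 := if_neg ht
      have h3 : ind S (RV.f i) = 1 := if_neg htf
      have h4 := chi_nonneg S i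
      rw [h1, h2, h3]; linarith
  -- per-clause bound
  have hU : ∀ j : Fin m, f RV.d1 (RV.u j) ≤ psi S cl j := by
    intro j
    by_cases hu : RV.u j ∈ S
    · rw [hmemz _ _ hu]; exact psi_nonneg S cl j
    by_cases hs : ∃ l : Fin 3, (if (cl j l).2 then (RV.t (cl j l).1 : RV n m) ∉ S
        else (RV.f (cl j l).1 : RV n m) ∉ S)
    · have : psi S cl j = 1 := if_pos hs
      rw [this]
      exact (hcap _ _).trans_eq (by simp [redCap])
    · have hpsi : psi S cl j = 0 := if_neg hs
      push_neg at hs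
      have hmemA : RV.u j ∈ Finset.univ \ S := by simp [Finset.mem_sdiff, hu]
      have hc := hcons (RV.u j) hmemA (by simp) (by simp)
      have hout : (∑ y, f (RV.u j) y) = 0 := by
        apply Finset.sum_eq_zero
        intro y _
        cases y with
        | t i' =>
            by_cases he : ∃ l, cl j l = (i', true)
            · obtain ⟨l, hl⟩ := he
              have := hs l
              rw [hl] at this
              simp only [if_true] at this
              exact hmemz _ _ (not_not.mp this)
            · exact hfz _ _ (by simp [redCap, he])
        | f i' =>
            by_cases he : ∃ l, cl j l = (i', false)
            · obtain ⟨l, hl⟩ := he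
              have := hs l
              rw [hl] at this
              simp only [if_false, Bool.false_eq_true] at this
              exact hmemz _ _ (not_not.mp this)
            · exact hfz _ _ (by simp [redCap, he])
        | d1 => exact hfz _ _ rfl
        | d2 => exact hfz _ _ rfl
        | kk => exact hfz _ _ rfl
        | a i' => exact hfz _ _ rfl
        | b i' => exact hfz _ _ rfl
        | u j' => exact hfz _ _ rfl
        | v j' => exact hfz _ _ rfl
      have hle : f RV.d1 (RV.u j) ≤ ∑ y, f y (RV.u j) :=
        Finset.single_le_sum (fun y _ => hnn y (RV.u j)) (Finset.mem_univ _)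
      rw [← hc, hout] at hle
      rw [hpsi]
      exact hle
  rw [hin, sub_zero, sum_RV (f RV.d1)]
  have z1 : f RV.d1 RV.d1 = 0 := hfz _ _ rfl
  have z2 : f RV.d1 RV.d2 = 0 := hfz _ _ rfl
  have z3 : f RV.d1 RV.kk = 0 := hfz _ _ rfl
  have z4 : ∀ i : Fin n, f RV.d1 (RV.b i) = 0 := fun i => hfz _ _ rfl
  have z5 : ∀ i : Fin n, f RV.d1 (RV.t i) = 0 := fun i => hfz _ _ rfl
  have z6 : ∀ i : Fin n, f RV.d1 (RV.f i) = 0 := fun i => hfz _ _ rfl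
  have z7 : ∀ j : Fin m, f RV.d1 (RV.v j) = 0 := fun j => hfz _ _ rfl
  rw [z1, z2, z3, Finset.sum_congr rfl (fun i _ => z4 i),
    Finset.sum_congr rfl (fun i _ => z5 i), Finset.sum_congr rfl (fun i _ => z6 i),
    Finset.sum_congr rfl (fun j _ => z7 j)]
  simp only [Finset.sum_const_zero, add_zero, zero_add]
  have hsum1 : (∑ i, f RV.d1 (RV.a i)) ≤
      ∑ i, (ind S (RV.a i) * (ind S (RV.t i) + ind S (RV.f i)) + chi S i) :=
    Finset.sum_le_sum fun i _ => hA i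
  have hsum2 : (∑ j, f RV.d1 (RV.u j)) ≤ ∑ j, psi S cl j :=
    Finset.sum_le_sum fun j _ => hU j
  rw [Finset.sum_add_distrib] at hsum1
  linarith

end RVProof

open RVProof

/-- If a removal subset `S` (avoiding `k`, `d1`, `d2`) achieves per-pair
vitality at least `n + m` for the pair `(d1, d2)`, then exactly one of
`t_i, f_i` lies in `S` for every `i`, and the induced assignment
(`x_i` false iff `t_i ∈ S`) satisfies every clause. -/
theorem reduction_flow_gives_sat {n m : ℕ} (cl : Fin m → Fin 3 → Fin n × Bool)
    (S : Finset (RV n m)) (hkS : RV.kk ∉ S) (hd1S : RV.d1 ∉ S)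
    (hd2S : RV.d2 ∉ S)
    (hflow : (n : ℝ) + m ≤
      maxFlow (redCap cl) (Finset.univ \ S) RV.d1 RV.d2 -
        maxFlow (redCap cl) ((Finset.univ \ S).erase RV.kk) RV.d1 RV.d2) :
    (∀ i : Fin n, Xor' (RV.t i ∈ S) (RV.f i ∈ S)) ∧
      (∀ j : Fin m, ∃ l : Fin 3,
        (fun i => decide ((RV.t i : RV n m) ∉ S)) (cl j l).1 = (cl j l).2) := by
  classical
  set L : ℝ := ∑ i, ind S (RV.a i) * (ind S (RV.t i) + ind S (RV.f i)) with hL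
  have hub : maxFlow (redCap cl) (Finset.univ \ S) RV.d1 RV.d2 ≤
      L + (∑ i, chi S i) + (∑ j, psi S cl j) := by
    apply csSup_le
    · exact ⟨0, (fun _ _ => 0), zero_isFlow cl _ _ _, by simp⟩
    · rintro r ⟨f, hf, rfl⟩
      exact flow_value_upper S cl hf
  have hlb : L ≤ maxFlow (redCap cl) ((Finset.univ \ S).erase RV.kk) RV.d1 RV.d2 :=
    le_csSup (maxFlow_bddAbove cl _ _ _)
      ⟨lowFlow S, lowFlow_isFlow S cl hd1S hd2S, lowFlow_value S⟩
  have key : (n : ℝ) + m ≤ (∑ i, chi S i) + (∑ j, psi S cl j) := by linarith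
  have hcn : (∑ i, chi S i) ≤ (n : ℝ) := by
    calc (∑ i, chi S i) ≤ ∑ _i : Fin n, (1 : ℝ) :=
          Finset.sum_le_sum fun i _ => chi_le_one S i
      _ = n := by simp
  have hpm : (∑ j, psi S cl j) ≤ (m : ℝ) := by
    calc (∑ j, psi S cl j) ≤ ∑ _j : Fin m, (1 : ℝ) :=
          Finset.sum_le_sum fun j _ => psi_le_one S cl j
      _ = m := by simp
  have hceq : (∑ i, chi S i) = ∑ _i : Fin n, (1 : ℝ) := by
    have : (∑ i, chi S i) = (n : ℝ) := le_antisymm hcn (by linarith)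
    rw [this]; simp
  have hpeq : (∑ j, psi S cl j) = ∑ _j : Fin m, (1 : ℝ) := by
    have : (∑ j, psi S cl j) = (m : ℝ) := le_antisymm hpm (by linarith)
    rw [this]; simp
  have hcall : ∀ i : Fin n, chi S i = 1 := by
    intro i
    exact (Finset.sum_eq_sum_iff_of_le fun i _ => chi_le_one S i).mp hceq i
      (Finset.mem_univ i)
  have hpall : ∀ j : Fin m, psi S cl j = 1 := by
    intro j
    exact (Finset.sum_eq_sum_iff_of_le fun j _ => psi_le_one S cl j).mp hpeq j
      (Finset.mem_univ j)
  have hxor : ∀ i : Fin n, Xor' (RV.t i ∈ S) (RV.f i ∈ S) := by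
    intro i
    have h := hcall i
    unfold chi at h
    by_contra hno
    rw [if_neg hno] at h
    norm_num at h
  refine ⟨hxor, ?_⟩
  intro j
  have h := hpall j
  unfold psi at h
  have hex : ∃ l : Fin 3, (if (cl j l).2 then (RV.t (cl j l).1 : RV n m) ∉ S
      else (RV.f (cl j l).1 : RV n m) ∉ S) := by
    by_contra hno
    rw [if_neg hno] at h
    norm_num at h
  obtain ⟨l, hl⟩ := hex
  refine ⟨l, ?_⟩
  simp only []
  cases hb : (cl j l).2 with
  | true =>
      rw [hb] at hl
      simp only [if_true] at hl
      simp [hl]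
  | false =>
      rw [hb] at hl
      simp only [Bool.false_eq_true, if_false] at hl
      rcases hxor (cl j l).1 with ⟨h1, _⟩ | ⟨h1, _⟩
      · simp [h1]
      · exact absurd h1 hl
end
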